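/- arXiv:1406.2084 — 9 statements merged into one kernel-verified Lean document; each statement's English description precedes it below -/
import Mathlib

section
/- Let B be an infinite Boolean algebra, let κ = |B|, and let U be an ultrafilter on B. Then (U,≥) ≡_T ([κ]^{<ω},⊆) if and only if there is a subset X ⊆ U of cardinality κ such that every infinite subset Y ⊆ X is unbounded in (U,≥), i.e., there is no u ∈ U with u ≤ y for all y ∈ Y. -/
open Cardinal

/-- A subset `X` of a preorder is cofinal if every element has an upper bound in `X`. -/
def TCofinal {P : Type*} [Preorder P] (X : Set P) : Prop :=
  ∀ p : P, ∃ x ∈ X, p ≤ x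

/-- A map is cofinal if it sends cofinal sets to cofinal sets. -/
def TCofinalMap {P Q : Type*} [Preorder P] [Preorder Q] (f : P → Q) : Prop :=
  ∀ X : Set P, TCofinal X → TCofinal (f '' X)

/-- `P ≤_T Q`: there is a cofinal map from `Q` to `P`. -/
def TukeyLE (P Q : Type*) [Preorder P] [Preorder Q] : Prop :=
  ∃ f : Q → P, TCofinalMap f

/-- Tukey equivalence. -/
def TukeyEquiv (P Q : Type*) [Preorder P] [Preorder Q] : Prop :=
  TukeyLE P Q ∧ TukeyLE Q P

/-- An ultrafilter on a Boolean algebra `B`. -/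
structure BAUltrafilter (B : Type*) [BooleanAlgebra B] where
  carrier : Set B
  bot_not_mem : ⊥ ∉ carrier
  inf_mem : ∀ a ∈ carrier, ∀ b ∈ carrier, a ⊓ b ∈ carrier
  up_closed : ∀ a ∈ carrier, ∀ b : B, a ≤ b → b ∈ carrier
  mem_or_compl_mem : ∀ b : B, b ∈ carrier ∨ bᶜ ∈ carrier

namespace BAUProofAux

variable {B : Type*} [BooleanAlgebra B]

lemma top_mem (U : BAUltrafilter B) : (⊤ : B) ∈ U.carrier := by
  rcases U.mem_or_compl_mem ⊥ with h | h
  · exact absurd h U.bot_not_mem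
  · simpa using h

lemma inf_finset_mem (U : BAUltrafilter B) (t : Finset B) (f : B → B)
    (hf : ∀ b ∈ t, f b ∈ U.carrier) : t.inf f ∈ U.carrier := by
  classical
  induction t using Finset.induction_on with
  | empty => simpa using top_mem U
  | @insert a s ha ih =>
      rw [Finset.inf_insert]
      exact U.inf_mem _ (hf a (Finset.mem_insert_self a s)) _
        (ih fun b hb => hf b (Finset.mem_insert_of_mem hb))

/-- The easy Tukey reduction: `(U,≥) ≤_T Finset B`, unconditionally. -/
lemma tukeyLE_dual_finset (U : BAUltrafilter B) :
    TukeyLE ((↥U.carrier)ᵒᵈ) (Finset B) := by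
  classical
  refine ⟨fun t => OrderDual.toDual
    ⟨(t.filter fun b => b ∈ U.carrier).inf id, ?_⟩, ?_⟩
  · exact inf_finset_mem U _ _ fun b hb => (Finset.mem_filter.mp hb).2
  · intro C hC p
    obtain ⟨t, htC, ht⟩ := hC {(OrderDual.ofDual p : ↥U.carrier).val}
    refine ⟨_, Set.mem_image_of_mem _ htC, ?_⟩
    -- goal : p ≤ f t in the dual order, i.e. inf ≤ p.val in B
    show (t.filter fun b => b ∈ U.carrier).inf id ≤ (OrderDual.ofDual p : ↥U.carrier).val
    refine Finset.inf_le (Finset.mem_filter.mpr ⟨?_, ?_⟩)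
    · exact ht (Finset.mem_singleton_self _)
    · exact (OrderDual.ofDual p : ↥U.carrier).property

end BAUProofAux

open BAUProofAux in
/-- For an infinite Boolean algebra `B` with `κ = |B|` and an ultrafilter `U`
on `B`, `(U,≥) ≡_T ([κ]^{<ω},⊆)` iff there is `X ⊆ U` of cardinality `κ` all of whose
infinite subsets are unbounded in `(U,≥)`.  Here `[|B|]^{<ω}` is realized as `Finset B`. -/
theorem stmt0 {B : Type*} [BooleanAlgebra B] [Infinite B] (U : BAUltrafilter B) :
    TukeyEquiv ((↥U.carrier)ᵒᵈ) (Finset B) ↔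
      ∃ X : Set B, X ⊆ U.carrier ∧ #↥X = #B ∧
        ∀ Y ⊆ X, Y.Infinite → ¬∃ u ∈ U.carrier, ∀ y ∈ Y, u ≤ y := by
  classical
  constructor
  · rintro ⟨-, g, hg⟩
    -- g : (↥U.carrier)ᵒᵈ → Finset B is a cofinal map
    -- Step 1: for each b there is u ∈ U such that every v ≤ u has b ∈ g v.
    have key : ∀ b : B, ∃ u : ↥U.carrier, ∀ v : ↥U.carrier,
        (v : B) ≤ (u : B) → b ∈ g (OrderDual.toDual v) := by
      intro b
      by_contra h
      push_neg at h
      set C : Set ((↥U.carrier)ᵒᵈ) := {d | b ∉ g d} with hCdef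
      have hC : TCofinal C := by
        intro p
        obtain ⟨v, hv, hbv⟩ := h (OrderDual.ofDual p)
        exact ⟨OrderDual.toDual v, hbv, hv⟩
      obtain ⟨s, hs, hbs⟩ := hg C hC {b}
      obtain ⟨d, hdC, rfl⟩ := hs
      exact hdC (hbs (Finset.mem_singleton_self b))
    choose ub hub using key
    set F : B → B := fun b => (ub b : B) with hFdef
    have hbg : ∀ b : B, b ∈ g (OrderDual.toDual (ub b)) := fun b => hub b (ub b) le_rfl
    -- fibers of F are finite
    have hfiber : ∀ b : B, {b' : B | F b' = F b} ⊆ ↑(g (OrderDual.toDual (ub b))) := by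
      intro b b' hb'
      have : ub b' = ub b := Subtype.ext hb'
      have := hub b' (ub b) (by rw [← this])
      exact this
    refine ⟨Set.range F, ?_, ?_, ?_⟩
    · rintro x ⟨b, rfl⟩; exact (ub b).property
    · -- cardinality
      have hcover : (Set.univ : Set B) ⊆ ⋃ x : ↥(Set.range F), F ⁻¹' {(x : B)} := by
        intro b _
        exact Set.mem_iUnion.mpr ⟨⟨F b, Set.mem_range_self b⟩, rfl⟩
      have hfin : ∀ x : ↥(Set.range F), (F ⁻¹' {(x : B)}).Finite := by
        rintro ⟨x, b, rfl⟩
        exact (g (OrderDual.toDual (ub b))).finite_toSet.subset (hfiber b)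
      have hinf : (Set.range F).Infinite := by
        intro hfinX
        haveI := hfinX.to_subtype
        have : (⋃ x : ↥(Set.range F), F ⁻¹' {(x : B)}).Finite :=
          Set.finite_iUnion hfin
        exact Set.infinite_univ (this.subset hcover)
      have haleph : ℵ₀ ≤ #(↥(Set.range F)) := by
        haveI := hinf.to_subtype
        exact Cardinal.aleph0_le_mk _
      refine le_antisymm (mk_set_le _) ?_
      have h1 : #B ≤ #(⋃ x : ↥(Set.range F), F ⁻¹' {(x : B)}) := by
        rw [← mk_univ (α := B)]
        exact mk_le_mk_of_subset hcover
      have h2 : #(⋃ x : ↥(Set.range F), F ⁻¹' {(x : B)}) ≤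
          #(↥(Set.range F)) * ℵ₀ := by
        refine (mk_iUnion_le _).trans ?_
        gcongr
        exact ciSup_le fun x => (hfin x).lt_aleph0.le
      have h3 : #(↥(Set.range F)) * ℵ₀ = #(↥(Set.range F)) :=
        Cardinal.mul_eq_left haleph haleph Cardinal.aleph0_ne_zero
      calc #B ≤ _ := h1
        _ ≤ _ := h2
        _ = _ := h3
    · -- unboundedness
      rintro Y hYX hYinf ⟨w, hw, hwy⟩
      apply hYinf
      have : Y ⊆ F '' ↑(g (OrderDual.toDual (⟨w, hw⟩ : ↥U.carrier))) := by
        intro y hy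
        obtain ⟨b, rfl⟩ := hYX hy
        refine ⟨b, ?_, rfl⟩
        exact hub b ⟨w, hw⟩ (hwy _ hy)
      exact Set.Finite.subset ((g _).finite_toSet.image F) this
  · rintro ⟨X, hXU, hcard, hunb⟩
    refine ⟨tukeyLE_dual_finset U, ?_⟩
    obtain ⟨e⟩ : Nonempty (↥X ≃ B) := Cardinal.eq.mp hcard
    -- the bounded pieces of X are finite
    have hfin : ∀ d : (↥U.carrier)ᵒᵈ,
        ((e '' {x : ↥X | ((OrderDual.ofDual d : ↥U.carrier) : B) ≤ (x : B)}) : Set B).Finite := by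
      intro d
      set v : ↥U.carrier := OrderDual.ofDual d
      refine Set.Finite.image _ ?_
      rw [← Set.not_infinite]
      intro hinf
      refine hunb (Subtype.val '' {x : ↥X | (v : B) ≤ (x : B)}) ?_ ?_ ⟨v, v.property, ?_⟩
      · rintro y ⟨x, hx, rfl⟩; exact x.property
      · exact hinf.image (Subtype.val_injective.injOn)
      · rintro y ⟨x, hx, rfl⟩; exact hx
    refine ⟨fun d => (hfin d).toFinset, ?_⟩
    intro C hC t
    -- find a lower bound in U for the finitely many elements coded by t
    have hu : t.inf (fun b => ((e.symm b : ↥X) : B)) ∈ U.carrier :=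
      inf_finset_mem U t _ fun b _ => hXU (e.symm b).property
    obtain ⟨c, hcC, hc⟩ := hC (OrderDual.toDual ⟨_, hu⟩)
    refine ⟨_, Set.mem_image_of_mem _ hcC, ?_⟩
    intro b hb
    rw [Set.Finite.mem_toFinset]
    refine ⟨e.symm b, ?_, e.apply_symm_apply b⟩
    have hcle : ((OrderDual.ofDual c : ↥U.carrier) : B) ≤
        t.inf (fun b => ((e.symm b : ↥X) : B)) := hc
    exact hcle.trans (Finset.inf_le hb)
end

section
/- Let B be an infinite Boolean algebra which has an independent family of cardinality |B|. Then there is an ultrafilter U on B such that (U,≥) ≡_T ([|B|]^{<ω},⊆). -/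
open Cardinal

namespace Stmt1Aux

variable {B : Type*} [BooleanAlgebra B]

/-- Finite intersection property. -/
def FIP (T : Set B) : Prop := ∀ F : Finset B, ↑F ⊆ T → F.inf id ≠ ⊥

lemma fip_insert {T : Set B} (hT : FIP T) {x : B}
    (h : ∃ G : Finset B, ↑G ⊆ T ∧ G.inf id ≤ x) : FIP (insert x T) := by
  classical
  obtain ⟨G, hG, hGx⟩ := h
  intro F hF hbot
  refine hT (F.erase x ∪ G) ?_ ?_
  · intro y hy
    rcases Finset.mem_union.mp hy with h1 | h2
    · rcases hF (Finset.mem_of_mem_erase h1) with h | h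
      · exact absurd h (Finset.ne_of_mem_erase h1)
      · exact h
    · exact hG h2
  · have hle : (F.erase x ∪ G).inf id ≤ F.inf id := by
      apply Finset.le_inf
      intro y hy
      by_cases hyx : y = x
      · subst hyx
        calc (F.erase y ∪ G).inf id ≤ G.inf id :=
              Finset.inf_mono Finset.subset_union_right
          _ ≤ y := hGx
      · exact Finset.inf_le (Finset.mem_union_left _ (Finset.mem_erase.mpr ⟨hyx, hy⟩))
    exact le_bot_iff.mp (hbot ▸ hle)

/-- A maximal FIP family containing a given FIP family exists. -/
lemma exists_maximal_fip (D : Set B) (hD : FIP D) :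
    ∃ M, D ⊆ M ∧ Maximal (fun T => FIP T) M := by
  have H : ∀ c ⊆ {T : Set B | FIP T}, IsChain (· ⊆ ·) c → c.Nonempty →
      ∃ ub ∈ {T : Set B | FIP T}, ∀ s ∈ c, s ⊆ ub := by
    intro c hc hchain hcne
    refine ⟨⋃₀ c, ?_, fun s hs => Set.subset_sUnion_of_mem hs⟩
    intro F hF
    classical
    have : ∃ t ∈ c, ↑F ⊆ t := by
      induction F using Finset.induction with
      | empty => exact hcne.imp (fun t ht => ⟨ht, by simp⟩)
      | @insert a s ha ih =>
        obtain ⟨t, htc, hts⟩ := ih (fun y hy => hF (Finset.mem_insert_of_mem hy))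
        obtain ⟨u, huc, hau⟩ := hF (Finset.mem_insert_self a s)
        rcases hchain.total htc huc with h | h
        · exact ⟨u, huc, by
            intro y hy
            rcases Finset.mem_insert.mp hy with rfl | hy
            · exact hau
            · exact h (hts hy)⟩
        · exact ⟨t, htc, by
            intro y hy
            rcases Finset.mem_insert.mp hy with rfl | hy
            · exact h hau
            · exact hts hy⟩
    obtain ⟨t, htc, hFt⟩ := this
    exact hc htc F hFt
  obtain ⟨M, hDM, hM⟩ := zorn_subset_nonempty {T : Set B | FIP T} H D hD
  exact ⟨M, hDM, hM⟩

variable {M : Set B}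

lemma max_fip_mem (hM : Maximal (fun T : Set B => FIP T) M) {x : B}
    (h : ∃ G : Finset B, ↑G ⊆ M ∧ G.inf id ≤ x) : x ∈ M := by
  have h1 : FIP (insert x M) := fip_insert hM.1 h
  exact hM.2 h1 (Set.subset_insert x M) (Set.mem_insert x M)

lemma max_bot_not_mem (hM : Maximal (fun T : Set B => FIP T) M) : ⊥ ∉ M := by
  intro h
  exact hM.1 {⊥} (by simpa using h) (by simp)

lemma max_inf_mem (hM : Maximal (fun T : Set B => FIP T) M) :
    ∀ a ∈ M, ∀ b ∈ M, a ⊓ b ∈ M := by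
  classical
  intro a ha b hb
  refine max_fip_mem hM ⟨{a, b}, ?_, ?_⟩
  · intro y hy
    rcases Finset.mem_insert.mp hy with rfl | hy
    · exact ha
    · rw [Finset.mem_singleton] at hy; exact hy ▸ hb
  · simp

lemma max_up_closed (hM : Maximal (fun T : Set B => FIP T) M) :
    ∀ a ∈ M, ∀ b : B, a ≤ b → b ∈ M := by
  intro a ha b hab
  exact max_fip_mem hM ⟨{a}, by simpa using ha, by simpa using hab⟩

lemma max_mem_or_compl_mem (hM : Maximal (fun T : Set B => FIP T) M) (b : B) :
    b ∈ M ∨ bᶜ ∈ M := by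
  classical
  by_contra hcon
  push_neg at hcon
  obtain ⟨hb, hbc⟩ := hcon
  have h1 : ¬ FIP (insert b M) := by
    intro h
    exact hb (hM.2 h (Set.subset_insert b M) (Set.mem_insert b M))
  rw [FIP] at h1; push_neg at h1
  obtain ⟨F, hF, hFbot⟩ := h1
  have hbF : b ∈ F := by
    by_contra hbF
    exact hM.1 F
      (fun y hy => (Set.mem_insert_iff.mp (hF hy)).resolve_left (fun h => hbF (h ▸ hy))) hFbot
  have heq : b ⊓ (F.erase b).inf id = ⊥ := by
    have h := hFbot
    rw [← Finset.insert_erase hbF, Finset.inf_insert] at h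
    simpa using h
  have hle : (F.erase b).inf id ≤ bᶜ :=
    le_compl_iff_disjoint_right.mpr (disjoint_iff.mpr (by rwa [inf_comm] at heq))
  exact hbc (max_fip_mem hM ⟨F.erase b, fun y hy =>
    (Set.mem_insert_iff.mp (hF (Finset.mem_of_mem_erase hy))).resolve_left
      (fun h => (Finset.ne_of_mem_erase hy) h), hle⟩)

lemma inf_mem_of_forall (htop : ⊤ ∈ M)
    (hmeet : ∀ a ∈ M, ∀ b ∈ M, a ⊓ b ∈ M) {β : Type*} (F : Finset β) (f : β → B)
    (hf : ∀ b ∈ F, f b ∈ M) : F.inf f ∈ M := by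
  classical
  induction F using Finset.induction with
  | empty => simpa using htop
  | @insert a s ha ih =>
    rw [Finset.inf_insert]
    exact hmeet _ (hf a (Finset.mem_insert_self a s)) _
      (ih fun b hb => hf b (Finset.mem_insert_of_mem hb))

end Stmt1Aux

/-- If an infinite Boolean algebra `B` has an independent family of
cardinality `|B|`, then some ultrafilter `U` on `B` satisfies
`(U,≥) ≡_T ([|B|]^{<ω},⊆)` (realized as `Finset B`).  A family `I` is independent if
finite meets of members of `I` and complements of (disjointly chosen) members of `I`
are never `⊥`. -/
theorem stmt1 {B : Type*} [BooleanAlgebra B] [Infinite B]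
    (I : Set B) (hcard : #↥I = #B)
    (hind : ∀ F G : Finset B, ↑F ⊆ I → ↑G ⊆ I → Disjoint F G →
      F.inf id ⊓ G.inf (·ᶜ) ≠ ⊥) :
    ∃ U : BAUltrafilter B, TukeyEquiv ((↥U.carrier)ᵒᵈ) (Finset B) := by
  classical
  obtain ⟨φ⟩ : Nonempty (↥I ≃ B) := Cardinal.eq.mp hcard
  set D : Set B := I ∪ {x | ∃ b : B, x = bᶜ ∧ {a ∈ I | b ≤ a}.Infinite} with hDdef
  -- D has the finite intersection property
  have hfipD : Stmt1Aux.FIP D := by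
    intro F hF hbot
    set F₁ : Finset B := F.filter (· ∈ I) with hF₁
    have key : ∀ x ∈ F.filter (· ∉ I), ∃ a, a ∈ I ∧ a ∉ F₁ ∧ aᶜ ≤ x := by
      intro x hx
      have hxF := Finset.mem_filter.mp hx
      rcases hF hxF.1 with h | h
      · exact absurd h hxF.2
      · obtain ⟨b, rfl, hbinf⟩ := h
        obtain ⟨a, ha⟩ := (hbinf.diff (F₁.finite_toSet)).nonempty
        exact ⟨a, ha.1.1, fun hc => ha.2 hc, compl_le_compl ha.1.2⟩
    choose! f hf1 hf2 hf3 using key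
    set G : Finset B := (F.filter (· ∉ I)).image f with hG
    have h1 : ↑F₁ ⊆ I := fun y hy => (Finset.mem_filter.mp hy).2
    have h2 : ↑G ⊆ I := by
      intro y hy
      obtain ⟨x, hx, rfl⟩ := Finset.mem_image.mp hy
      exact hf1 x hx
    have h3 : Disjoint F₁ G := by
      rw [Finset.disjoint_right]
      intro y hy
      obtain ⟨x, hx, rfl⟩ := Finset.mem_image.mp hy
      exact hf2 x hx
    apply hind F₁ G h1 h2 h3
    refine le_bot_iff.mp (le_trans ?_ hbot.le)
    apply Finset.le_inf
    intro y hy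
    by_cases hyI : y ∈ I
    · exact le_trans inf_le_left (Finset.inf_le (Finset.mem_filter.mpr ⟨hy, hyI⟩))
    · have hyF2 : y ∈ F.filter (· ∉ I) := Finset.mem_filter.mpr ⟨hy, hyI⟩
      calc F₁.inf id ⊓ G.inf (·ᶜ) ≤ G.inf (·ᶜ) := inf_le_right
        _ ≤ (f y)ᶜ := Finset.inf_le (Finset.mem_image.mpr ⟨y, hyF2, rfl⟩)
        _ ≤ y := hf3 y hyF2
  obtain ⟨M, hDM, hM⟩ := Stmt1Aux.exists_maximal_fip D hfipD
  have hIM : I ⊆ M := Set.subset_union_left.trans hDM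
  have hbotM : ⊥ ∉ M := Stmt1Aux.max_bot_not_mem hM
  have hinfM : ∀ a ∈ M, ∀ b ∈ M, a ⊓ b ∈ M := Stmt1Aux.max_inf_mem hM
  have hupM : ∀ a ∈ M, ∀ b : B, a ≤ b → b ∈ M := Stmt1Aux.max_up_closed hM
  have hcomplM : ∀ b : B, b ∈ M ∨ bᶜ ∈ M := Stmt1Aux.max_mem_or_compl_mem hM
  have htopM : ⊤ ∈ M := by
    rcases hcomplM ⊥ with h | h
    · exact absurd h hbotM
    · rwa [compl_bot] at h
  -- finiteness of bound sets
  have hfin : ∀ u : ↥M, ({a : ↥I | (u : B) ≤ (a : B)}).Finite := by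
    intro u
    by_contra hfinite
    have hinf : ({a : ↥I | (u : B) ≤ (a : B)}).Infinite := hfinite
    have himg : {a ∈ I | (u : B) ≤ a}.Infinite := by
      have := hinf.image (Set.injOn_of_injective Subtype.val_injective)
      convert this using 1
      ext b
      constructor
      · rintro ⟨hbI, hub⟩
        exact ⟨⟨b, hbI⟩, hub, rfl⟩
      · rintro ⟨a, hua, rfl⟩
        exact ⟨a.2, hua⟩
    have hcmem : (u : B)ᶜ ∈ M := hDM (Set.mem_union_right _ ⟨(u : B), rfl, himg⟩)
    have : (u : B) ⊓ (u : B)ᶜ ∈ M := hinfM _ u.2 _ hcmem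
    rw [inf_compl_eq_bot] at this
    exact hbotM this
  refine ⟨⟨M, hbotM, hinfM, hupM, hcomplM⟩, ?_, ?_⟩
  · -- (↥M)ᵒᵈ ≤_T Finset B : cofinal map f : Finset B → (↥M)ᵒᵈ
    refine ⟨fun F => OrderDual.toDual ⟨(F.filter (· ∈ M)).inf id, ?_⟩, ?_⟩
    · exact Stmt1Aux.inf_mem_of_forall htopM hinfM _ _
        (fun b hb => (Finset.mem_filter.mp hb).2)
    · intro X hX p
      set u : ↥M := OrderDual.ofDual p with hu
      obtain ⟨F, hFX, hFle⟩ := hX {u.val}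
      refine ⟨_, Set.mem_image_of_mem _ hFX, ?_⟩
      have huF : u.val ∈ F := Finset.le_iff_subset.mp hFle (Finset.mem_singleton_self _)
      show (F.filter (· ∈ M)).inf id ≤ u.val
      exact Finset.inf_le (Finset.mem_filter.mpr ⟨huF, u.2⟩)
  · -- Finset B ≤_T (↥M)ᵒᵈ : cofinal map g : (↥M)ᵒᵈ → Finset B
    refine ⟨fun p => ((hfin (OrderDual.ofDual p)).toFinset).image (fun a => φ a), ?_⟩
    intro X hX F
    have hw : F.inf (fun b => ((φ.symm b : ↥I) : B)) ∈ M :=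
      Stmt1Aux.inf_mem_of_forall htopM hinfM _ _ (fun b _ => hIM (φ.symm b).2)
    obtain ⟨p, hpX, hple⟩ := hX (OrderDual.toDual ⟨_, hw⟩)
    refine ⟨_, Set.mem_image_of_mem _ hpX, ?_⟩
    intro b hb
    have hle1 : ((OrderDual.ofDual p : ↥M) : B) ≤ F.inf (fun b => ((φ.symm b : ↥I) : B)) :=
      hple
    have hle2 : ((OrderDual.ofDual p : ↥M) : B) ≤ ((φ.symm b : ↥I) : B) :=
      le_trans hle1 (Finset.inf_le hb)
    exact Finset.mem_image.mpr ⟨φ.symm b,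
      (Set.Finite.mem_toFinset _).mpr hle2, φ.apply_symm_apply b⟩
end

section
/- Let κ be an infinite cardinal and let Clop(2^κ) be the Boolean algebra of clopen subsets of the product space 2^κ (functions from κ to the two-point discrete space, with the product topology), ordered by inclusion. Then every ultrafilter U on Clop(2^κ) satisfies (U,⊇) ≡_T ([κ]^{<ω},⊆). -/
open Cardinal

/-- An ultrafilter on a Boolean algebra `B` of subsets of `X` (a field of sets):
a subset of `B` omitting `∅`, closed under intersection, upward closed in `B`, and
containing `s` or `sᶜ` for each `s ∈ B`; regarded as the partial order `(U,⊇)`. -/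
structure SetUltrafilter {X : Type*} (B : Set (Set X)) where
  carrier : Set (Set X)
  subset_alg : carrier ⊆ B
  empty_not_mem : ∅ ∉ carrier
  inter_mem : ∀ a ∈ carrier, ∀ b ∈ carrier, a ∩ b ∈ carrier
  up_closed : ∀ a ∈ carrier, ∀ b ∈ B, a ⊆ b → b ∈ carrier
  mem_or_compl_mem : ∀ b ∈ B, b ∈ carrier ∨ bᶜ ∈ carrier

/-
Every clopen subset of `2^ι` depends on only finitely many coordinates (compactness), and an
ultrafilter `U` on `Clop(2^ι)` converges to a point `b`: every member of `U` contains `b`. So the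
cylinder around `b` over a finite `F ⊆ ι` lies in `u ∈ U` as soon as `F` contains a finite support
of `u`, and conversely `u` lies in the cylinder over `G` only if `G` is contained in the support
of `u`. Hence "finite support" and "cylinder around `b`" are cofinal maps in both directions.
-/

open Function

lemma tukeyLE_of_le_imp_le {P Q : Type*} [Preorder P] [Preorder Q] (f : Q → P) (g : P → Q)
    (h : ∀ p q, g p ≤ q → p ≤ f q) : TukeyLE P Q :=
  ⟨f, fun X hX p => by
    obtain ⟨x, hxX, hpx⟩ := hX (g p)
    exact ⟨f x, Set.mem_image_of_mem f hxX, h p x hpx⟩⟩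

lemma IsClopen.isLocallyConstant_mem {X : Type*} [TopologicalSpace X] {s : Set X}
    (hs : IsClopen s) : IsLocallyConstant (· ∈ s) := by
  refine (IsLocallyConstant.iff_exists_open _).2 fun x => ?_
  by_cases hx : x ∈ s
  · exact ⟨s, hs.isOpen, hx, fun y hy => propext (iff_of_true hy hx)⟩
  · exact ⟨sᶜ, hs.compl.isOpen, hx, fun y hy => propext (iff_of_false hy hx)⟩

/-- Each fibre contains a basic open box around each of its points; finitely many boxes cover
the compact space, and the union of their finite supports works. -/
theorem IsLocallyConstant.exists_finset_dependsOn {ι β : Type*} {X : ι → Type*}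
    [∀ i, TopologicalSpace (X i)] [CompactSpace (Π i, X i)] {f : (Π i, X i) → β}
    (hf : IsLocallyConstant f) : ∃ F : Finset ι, DependsOn f F := by
  classical
  have hbox : ∀ x, ∃ (I : Finset ι) (u : ∀ i, Set (X i)),
      (∀ i ∈ I, IsOpen (u i) ∧ x i ∈ u i) ∧ (I : Set ι).pi u ⊆ f ⁻¹' {f x} :=
    fun x => isOpen_pi_iff.1 (hf {f x}) x rfl
  choose I u hu hsub using hbox
  obtain ⟨T, hT⟩ := isCompact_univ.elim_finite_subcover (fun x => (I x : Set ι).pi (u x))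
    (fun x => isOpen_set_pi (I x).finite_toSet fun i hi => (hu x i hi).1)
    (fun x _ => Set.mem_iUnion.2 ⟨x, fun i hi => (hu x i hi).2⟩)
  refine ⟨T.biUnion I, fun p q hpq => ?_⟩
  obtain ⟨x, hxT, hpx⟩ : ∃ x ∈ T, p ∈ (I x : Set ι).pi (u x) := by
    simpa using hT (Set.mem_univ p)
  have hqx : q ∈ (I x : Set ι).pi (u x) := fun i hi =>
    hpq i (Finset.mem_coe.2 (Finset.mem_biUnion.2 ⟨x, hxT, hi⟩)) ▸ hpx i hi
  exact (hsub x hpx).trans (hsub x hqx).symm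

section DependsOn

variable {ι : Type*} {X : ι → Type*} {s : Set (Π i, X i)} {F : Set ι}

lemma DependsOn.pi_singleton_subset (hs : DependsOn (· ∈ s) F) {x : Π i, X i} (hx : x ∈ s) :
    F.pi (fun i => {x i}) ⊆ s :=
  fun _ hy => Eq.mp (hs fun i hi => (hy i hi).symm) hx

lemma DependsOn.subset_of_subset_pi_singleton [∀ i, Nontrivial (X i)]
    (hs : DependsOn (· ∈ s) F) (hne : s.Nonempty) {G : Set ι} {x : Π i, X i}
    (hsub : s ⊆ G.pi (fun i => {x i})) : G ⊆ F := by
  classical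
  intro a haG
  by_contra haF
  obtain ⟨p, hp⟩ := hne
  obtain ⟨y, hy⟩ := exists_ne (p a)
  have hq : Function.update p a y ∈ s :=
    Eq.mp (hs fun i hi => (update_of_ne (ne_of_mem_of_not_mem hi haF) y p).symm) hp
  have hqa : y = x a := by simpa using hsub hq a haG
  exact hy (hqa.trans (hsub hp a haG).symm)

end DependsOn

namespace SetUltrafilter

section

variable {X : Type*} {B : Set (Set X)} (U : SetUltrafilter B)

lemma nonempty_of_mem {u : Set X} (hu : u ∈ U.carrier) : u.Nonempty :=
  Set.nonempty_iff_ne_empty.2 fun h => U.empty_not_mem (h ▸ hu)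

lemma univ_mem (huniv : Set.univ ∈ B) : Set.univ ∈ U.carrier :=
  (U.mem_or_compl_mem _ huniv).resolve_right (by simpa using U.empty_not_mem)

end

section Cantor

variable {ι : Type*} (U : SetUltrafilter {s : Set (ι → Bool) | IsClopen s})

noncomputable def limit (a : ι) : Bool :=
  open Classical in decide ({p : ι → Bool | p a = true} ∈ U.carrier)

lemma eval_eq_limit_mem (a : ι) : {p : ι → Bool | p a = U.limit a} ∈ U.carrier := by
  classical
  have hclopen : IsClopen {p : ι → Bool | p a = true} :=
    (isClopen_discrete {true}).preimage (continuous_apply a)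
  by_cases h : {p : ι → Bool | p a = true} ∈ U.carrier
  · simp [limit, h]
  · simpa [limit, h, Set.compl_ofPred] using (U.mem_or_compl_mem _ hclopen).resolve_left h

lemma pi_limit_mem (F : Finset ι) : (F : Set ι).pi (fun a => {U.limit a}) ∈ U.carrier := by
  classical
  induction F using Finset.induction with
  | empty => simpa using U.univ_mem isClopen_univ
  | insert a F _ ih =>
    rw [Finset.coe_insert, Set.insert_pi]
    exact U.inter_mem _ (U.eval_eq_limit_mem a) _ ih

noncomputable def support (u : U.carrier) : Finset ι :=
  ((U.subset_alg u.2).isLocallyConstant_mem.exists_finset_dependsOn).choose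

lemma dependsOn_support (u : U.carrier) : DependsOn (· ∈ u.1) (U.support u : Set ι) :=
  ((U.subset_alg u.2).isLocallyConstant_mem.exists_finset_dependsOn).choose_spec

lemma limit_mem (u : U.carrier) : U.limit ∈ u.1 := by
  obtain ⟨p, hpu, hp⟩ := U.nonempty_of_mem (U.inter_mem _ u.2 _ (U.pi_limit_mem (U.support u)))
  exact Eq.mp (U.dependsOn_support u hp) hpu

theorem tukeyEquiv_finset : TukeyEquiv (U.carrierᵒᵈ) (Finset ι) := by
  let cyl (F : Finset ι) : U.carrierᵒᵈ := OrderDual.toDual ⟨_, U.pi_limit_mem F⟩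
  constructor
  · refine tukeyLE_of_le_imp_le cyl (fun u => U.support (OrderDual.ofDual u)) fun u F hF => ?_
    calc (cyl F).ofDual.1 ⊆ (U.support u.ofDual : Set ι).pi (fun a => {U.limit a}) :=
          Set.pi_mono' (fun _ _ => subset_rfl) hF
      _ ⊆ u.ofDual.1 := (U.dependsOn_support _).pi_singleton_subset (U.limit_mem _)
  · exact tukeyLE_of_le_imp_le (fun u => U.support (OrderDual.ofDual u)) cyl fun G u hu =>
      (U.dependsOn_support _).subset_of_subset_pi_singleton (U.nonempty_of_mem u.ofDual.2) hu

end Cantor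

end SetUltrafilter

theorem stmt3_general (κ : Cardinal)
    (U : SetUltrafilter {s : Set (κ.ord.ToType → Bool) | IsClopen s}) :
    TukeyEquiv ((↥U.carrier)ᵒᵈ) (Finset κ.ord.ToType) :=
  U.tukeyEquiv_finset

/-- For an infinite cardinal `κ`, every ultrafilter on the Boolean algebra
`Clop(2^κ)` of clopen subsets of the product space `2^κ` (here `κ.ord.toType → Bool`
with the product topology) satisfies `(U,⊇) ≡_T ([κ]^{<ω},⊆)`. -/
theorem stmt3 (κ : Cardinal) (hκ : ℵ₀ ≤ κ)
    (U : SetUltrafilter {s : Set (κ.ord.ToType → Bool) | IsClopen s}) :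
    TukeyEquiv ((↥U.carrier)ᵒᵈ) (Finset κ.ord.ToType) :=
  stmt3_general κ U
end

section
/- Let κ be an infinite cardinal and let B be an atomless Boolean algebra such that every subset of B of cardinality at most κ has a supremum (B is κ⁺-complete). Then there is no ultrafilter U on B with (U,≥) ≡_T (κ,≤), where κ carries its ordinal order. -/
open Cardinal

/-!
A Tukey reduction of `(U, ≥)` to `κ` transports a cofinal subset of `κ` of size `λ = cf κ` to a
family of `λ` elements of `U` that is cofinal in `(U, ≥)` and whose proper initial segments are
bounded in `U`. Taking infima of initial segments (`κ⁺`-completeness) gives a continuous decreasing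
chain `(C i)_{i < λ}` generating `U`. Its differences `d i = C i \ C (i + 1)` are pairwise
disjoint, and continuity together with non-principality of `U` forces every common upper bound of
them to be `⊤`. Splitting each nonzero `d i` (atomlessness) and joining one half of each gives
`A` such that neither `A` nor `Aᶜ` contains a nonzero `d i`. One of them lies in `U`, so it
contains some `C i` and hence every `d j` with `j ≥ i`; these vanish, so `(C i)ᶜ` bounds all the
`d j` and `C i = ⊥`, a contradiction.
-/

open Function Set Order

theorem TCofinalMap.exists_forall_le {P Q : Type*} [Preorder P] [Preorder Q] {f : P → Q}
    (hf : TCofinalMap f) (q : Q) : ∃ p, ∀ p' ≥ p, q ≤ f p' := by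
  by_contra! h
  obtain ⟨_, ⟨p, hp, rfl⟩, hqp⟩ := hf {p | ¬q ≤ f p} (fun p ↦ by simpa [and_comm] using h p) q
  exact hp hqp

theorem bddAbove_of_mk_lt_cof {α : Type*} [LinearOrder α] {s : Set α} (hs : #s < cof α) :
    BddAbove s :=
  .of_not_isCofinal fun h ↦ (cof_le h).not_gt hs

theorem TCofinalMap.exists_isCofinal_range_bddAbove_image_Iio {α Q : Type*} [LinearOrder α]
    [Preorder Q] {f : α → Q} (hf : TCofinalMap f) :
    ∃ g : (cof α).ord.ToType → Q, IsCofinal (range g) ∧ ∀ i, BddAbove (g '' Iio i) := by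
  obtain ⟨s, hs, hs_card⟩ := exists_cof_eq α
  obtain ⟨e⟩ : Nonempty ((cof α).ord.ToType ≃ s) := Cardinal.eq.1 (by rw [mk_ord_toType, hs_card])
  choose t ht using hf.exists_forall_le
  refine ⟨fun i ↦ f (e i), fun q ↦ ?_, fun i ↦ ?_⟩
  · obtain ⟨a, ha, hta⟩ := hs (t q)
    exact ⟨_, ⟨e.symm ⟨a, ha⟩, rfl⟩, by simpa using ht q a hta⟩
  · obtain ⟨a, ha⟩ := bddAbove_of_mk_lt_cof (s := (fun j ↦ t (f (e j))) '' Iio i)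
      (mk_image_le.trans_lt (by simpa using mk_Iio_lt i))
    exact ⟨f a, by rintro _ ⟨j, hj, rfl⟩; exact ht _ a (ha ⟨j, hj, rfl⟩)⟩

theorem exists_isGLB_of_forall_exists_isLUB {B : Type*} [BooleanAlgebra B] {κ : Cardinal}
    (hcomplete : ∀ S : Set B, #S ≤ κ → ∃ b : B, IsLUB S b) {S : Set B} (hS : #S ≤ κ) :
    ∃ b, IsGLB S b := by
  obtain ⟨b, hb⟩ := hcomplete (compl '' S) (mk_image_le.trans hS)
  refine ⟨bᶜ, fun s hs ↦ compl_le_iff_compl_le.1 (hb.1 ⟨s, hs, rfl⟩),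
    fun c hc ↦ le_compl_comm.1 (hb.2 ?_)⟩
  rintro _ ⟨s, hs, rfl⟩
  exact compl_le_compl (hc hs)

theorem exists_forall_not_le_and_not_le_compl {B ι : Type*} [BooleanAlgebra B]
    (hatomless : ∀ b : B, ¬IsAtom b) (hcomplete : ∀ s : ι → B, ∃ a, IsLUB (range s) a)
    {d : ι → B} (hd : Pairwise (Disjoint on d)) :
    ∃ A, ∀ i, d i ≠ ⊥ → ¬d i ≤ A ∧ ¬d i ≤ Aᶜ := by
  have hsplit (i : ι) : ∃ e ≤ d i, d i ≠ ⊥ → e ≠ ⊥ ∧ e ≠ d i := by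
    by_cases hi : d i = ⊥
    · exact ⟨⊥, bot_le, (absurd hi ·)⟩
    · obtain ⟨e, he, he0⟩ : ∃ e, e < d i ∧ e ≠ ⊥ := by simpa [IsAtom, hi] using hatomless (d i)
      exact ⟨e, he.le, fun _ ↦ ⟨he0, he.ne⟩⟩
  choose e he_le he using hsplit
  obtain ⟨A, hA⟩ := hcomplete e
  refine ⟨A, fun i hi ↦
    ⟨fun hdA ↦ (he i hi).2 (le_antisymm (he_le i) ?_), fun hdA ↦ (he i hi).1 ?_⟩⟩
  · have hA_le : A ≤ e i ⊔ (d i)ᶜ := hA.2 <| by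
      rintro _ ⟨j, rfl⟩
      rcases eq_or_ne j i with rfl | hji
      · exact le_sup_left
      · exact le_sup_of_le_right ((he_le j).trans (hd hji).le_compl_right)
    exact Disjoint.left_le_of_le_sup_right (hdA.trans hA_le) disjoint_compl_right
  · exact disjoint_self.1 (disjoint_compl_right.mono (hA.1 ⟨i, rfl⟩) ((he_le i).trans hdA))

namespace BAUltrafilter

variable {B : Type*} [BooleanAlgebra B] (U : BAUltrafilter B)

theorem ne_bot_of_mem {a : B} (ha : a ∈ U.carrier) : a ≠ ⊥ :=
  fun h ↦ U.bot_not_mem (h ▸ ha)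

theorem eq_bot_of_mem_lowerBounds (hatomless : ∀ b : B, ¬IsAtom b) {x : B}
    (hx : x ∈ lowerBounds U.carrier) : x = ⊥ := by
  by_contra hx0
  obtain ⟨b, hbx, hb0⟩ : ∃ b, b < x ∧ b ≠ ⊥ := by simpa [IsAtom, hx0] using hatomless x
  rcases U.mem_or_compl_mem b with hb | hb
  · exact (hx hb).not_gt hbx
  · exact hb0 (le_compl_self.1 (hbx.le.trans (hx hb)))

/-- A decreasing chain generating `U` that is continuous at limit stages. -/
structure IsContinuousBase {ι : Type*} [Preorder ι] [SuccOrder ι] (C : ι → B) : Prop where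
  mem : ∀ i, C i ∈ U.carrier
  exists_le : ∀ u ∈ U.carrier, ∃ i, C i ≤ u
  isGLB : ∀ i, IsGLB ((fun j ↦ C (succ j)) '' Iio i) (C i)

variable {U}

theorem exists_isContinuousBase {ι : Type*} [LinearOrder ι] [SuccOrder ι] [NoMaxOrder ι]
    {g : ι → (↥U.carrier)ᵒᵈ} (hg_cof : IsCofinal (range g)) (hg_bdd : ∀ i, BddAbove (g '' Iio i))
    (hglb : ∀ i, ∃ c, IsGLB ((fun j ↦ ((OrderDual.ofDual (g j) : ↥U.carrier) : B)) '' Iio i) c) :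
    ∃ C : ι → B, U.IsContinuousBase C := by
  choose C hC using hglb
  refine ⟨C, fun i ↦ ?_, fun u hu ↦ ?_, fun i ↦ ⟨?_, fun x hx ↦ (hC i).2 ?_⟩⟩
  · obtain ⟨u, hu⟩ := hg_bdd i
    refine U.up_closed _ (OrderDual.ofDual u).2 _ ((hC i).2 ?_)
    rintro _ ⟨j, hj, rfl⟩
    exact hu ⟨j, hj, rfl⟩
  · obtain ⟨_, ⟨j, rfl⟩, hj⟩ := hg_cof (OrderDual.toDual ⟨u, hu⟩)
    exact ⟨succ j, ((hC (succ j)).1 ⟨j, lt_succ j, rfl⟩).trans hj⟩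
  · rintro _ ⟨j, hj, rfl⟩
    refine (hC (succ j)).2 ?_
    rintro _ ⟨k, hk, rfl⟩
    exact (hC i).1 ⟨k, (lt_succ_iff.1 hk).trans_lt hj, rfl⟩
  · rintro _ ⟨j, hj, rfl⟩
    exact (hx ⟨j, hj, rfl⟩).trans ((hC (succ j)).1 ⟨j, lt_succ j, rfl⟩)

section IsContinuousBase

variable {ι : Type*} [Preorder ι] [SuccOrder ι] {C : ι → B}

theorem IsContinuousBase.antitone (hC : U.IsContinuousBase C) : Antitone C := by
  intro j i hji
  refine (hC.isGLB j).2 ?_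
  rintro _ ⟨k, hk, rfl⟩
  exact (hC.isGLB i).1 ⟨k, hk.trans_le hji, rfl⟩

theorem IsContinuousBase.compl_le [WellFoundedLT ι] (hC : U.IsContinuousBase C) {D : B}
    (hD : ∀ j, C j \ C (succ j) ≤ D) (i : ι) : Dᶜ ≤ C i := by
  induction i using WellFoundedLT.induction with
  | _ i ih =>
  refine (hC.isGLB i).2 ?_
  rintro _ ⟨j, hj, rfl⟩
  exact Disjoint.left_le_of_le_sup_right ((ih j hj).trans (sdiff_le_iff.1 (hD j)))
    disjoint_compl_left

end IsContinuousBase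

theorem not_isContinuousBase {ι : Type*} [LinearOrder ι] [WellFoundedLT ι] [SuccOrder ι]
    {C : ι → B} (hatomless : ∀ b : B, ¬IsAtom b)
    (hcomplete : ∀ s : ι → B, ∃ a, IsLUB (range s) a) : ¬U.IsContinuousBase C := by
  intro hC
  have hd_le_compl {j k : ι} (hjk : succ j ≤ k) : C j \ C (succ j) ≤ (C k)ᶜ :=
    le_compl_iff_disjoint_right.2 (disjoint_sdiff_self_left.mono_right (hC.antitone hjk))
  set d : ι → B := fun j ↦ C j \ C (succ j)
  have hd : Pairwise (Disjoint on d) := (pairwise_disjoint_on d).2 fun j k hjk ↦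
    disjoint_compl_left.mono (hd_le_compl (succ_le_of_lt hjk)) sdiff_le
  obtain ⟨A, hA⟩ := exists_forall_not_le_and_not_le_compl hatomless hcomplete hd
  obtain ⟨W, hWU, hW⟩ : ∃ W ∈ U.carrier, ∀ j, d j ≤ W → d j = ⊥ := by
    rcases U.mem_or_compl_mem A with h | h
    · exact ⟨A, h, fun j hj ↦ by_contra fun h0 ↦ (hA j h0).1 hj⟩
    · exact ⟨Aᶜ, h, fun j hj ↦ by_contra fun h0 ↦ (hA j h0).2 hj⟩
  obtain ⟨i, hi⟩ := hC.exists_le W hWU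
  have hd_le (j : ι) : d j ≤ (C i)ᶜ := by
    rcases lt_or_ge j i with hji | hij
    · exact hd_le_compl (succ_le_of_lt hji)
    · rw [hW j (sdiff_le.trans ((hC.antitone hij).trans hi))]
      exact bot_le
  refine U.ne_bot_of_mem (hC.mem i) (U.eq_bot_of_mem_lowerBounds hatomless fun u hu ↦ ?_)
  obtain ⟨j, hj⟩ := hC.exists_le u hu
  simpa using (hC.compl_le hd_le j).trans hj

end BAUltrafilter

/-- If `κ` is infinite and `B` is an atomless Boolean algebra in which every
subset of cardinality at most `κ` has a supremum (`κ⁺`-completeness), then no ultrafilter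
`U` on `B` satisfies `(U,≥) ≡_T (κ,≤)` (where `κ` carries its ordinal order, realized as
`κ.ord.toType`). -/
theorem stmt4 {B : Type*} [BooleanAlgebra B] (κ : Cardinal) (hκ : ℵ₀ ≤ κ)
    (hatomless : ∀ b : B, ¬IsAtom b)
    (hcomplete : ∀ S : Set B, #↥S ≤ κ → ∃ b : B, IsLUB S b) :
    ¬∃ U : BAUltrafilter B, TukeyEquiv ((↥U.carrier)ᵒᵈ) κ.ord.ToType := by
  rintro ⟨U, ⟨f, hf⟩, -⟩
  obtain ⟨g, hg_cof, hg_bdd⟩ := hf.exists_isCofinal_range_bddAbove_image_Iio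
  have hcof : ℵ₀ ≤ cof κ.ord.ToType := by
    rw [Ordinal.cof_toType, Ordinal.aleph0_le_cof_iff, Ordinal.one_lt_cof_iff]
    exact isSuccLimit_ord hκ
  have hcof_le : cof κ.ord.ToType ≤ κ := (cof_le_cardinalMk _).trans_eq (mk_ord_toType κ)
  have := noMaxOrder hcof
  obtain ⟨C, hC⟩ := BAUltrafilter.exists_isContinuousBase hg_cof hg_bdd fun i ↦
    exists_isGLB_of_forall_exists_isLUB hcomplete
      (mk_image_le.trans ((by simpa using mk_Iio_lt i : #(Iio i) < _).le.trans hcof_le))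
  exact BAUltrafilter.not_isContinuousBase hatomless
    (fun s ↦ hcomplete _ (mk_range_le.trans ((mk_ord_toType _).trans_le hcof_le))) hC
end

section
/- Let κ be a regular uncountable cardinal and let B be a Boolean algebra satisfying the κ-chain condition: every set of pairwise disjoint nonzero elements of B has cardinality less than κ. Then for every regular cardinal λ ≥ κ, there is no ultrafilter U on B with (U,≥) ≡_T (λ,≤), where λ carries its ordinal order. -/
open Cardinal

/-!
A cofinal map `λ → (U, ≥)` is improved, by a recursion that uses the regularity of `λ` and the
closure of `U` under `⊓`, to a decreasing sequence `(a_α)_{α<λ}` coinitial in `U`. A cofinal map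
`(U, ≥) → λ` rules out a least element of `U`, so the sequence keeps dropping, and the differences
`a_α \ a_β` between a value and the next smaller one are pairwise disjoint: by the chain condition
the sequence takes fewer than `κ ≤ λ` values. By regularity some value is then taken cofinally
often, and that value is a least element of `U`.
-/

open Set

universe u

section Tukey

variable {P Q : Type*} [Preorder P] [Preorder Q] {f : P → Q}

theorem TCofinalMap.exists_forall_ge_le_apply (hf : TCofinalMap f) (q : Q) :
    ∃ p₀, ∀ p, p₀ ≤ p → q ≤ f p := by
  by_contra! h
  obtain ⟨_, ⟨p, hp, rfl⟩, hqp⟩ :=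
    hf {p | ¬q ≤ f p} (fun p₀ => (h p₀).imp fun _ hp => ⟨hp.2, hp.1⟩) q
  exact hp hqp

theorem TCofinalMap.isTop_apply (hf : TCofinalMap f) {p : P} (hp : IsTop p) : IsTop (f p) := by
  intro q
  obtain ⟨_, ⟨p', rfl, rfl⟩, hq⟩ := hf {p} (fun x => ⟨p, rfl, hp x⟩) q
  exact hq

end Tukey

namespace Cardinal.IsRegular

variable {c : Cardinal.{u}}

theorem cof_ord_toType (hc : c.IsRegular) : Order.cof c.ord.ToType = c := by
  rw [Ordinal.cof_toType, hc.cof_ord]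

theorem exists_gt_of_mk_lt (hc : c.IsRegular) {s : Set c.ord.ToType} (hs : #s < c) :
    ∃ x, ∀ y ∈ s, y < x :=
  not_isCofinal_iff.1 fun hcof => (Order.cof_le hcof).not_gt (by rwa [hc.cof_ord_toType])

theorem exists_isCofinal_preimage_singleton (hc : c.IsRegular) {X : Type u}
    (h : c.ord.ToType → X) (hh : #(range h) < c) : ∃ x ∈ range h, IsCofinal (h ⁻¹' {x}) := by
  have hunion : IsCofinal (⋃ x : range h, h ⁻¹' {x.1}) := by simp [← preimage_iUnion]
  obtain ⟨⟨x, hx⟩, hcof⟩ := isCofinal_of_isCofinal_iUnion hunion (by rwa [hc.cof_ord_toType])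
  exact ⟨x, hx, hcof⟩

end Cardinal.IsRegular

theorem TCofinalMap.exists_monotone_isCofinal_range {c : Cardinal.{u}} (hc : c.IsRegular)
    {P : Type*} [Preorder P] [IsDirectedOrder P] {f : c.ord.ToType → P} (hf : TCofinalMap f) :
    ∃ a : c.ord.ToType → P, Monotone a ∧ IsCofinal (range a) := by
  choose t ht using hf.exists_forall_ge_le_apply
  have step : ∀ α (prev : ∀ γ < α, P), ∃ z, f α ≤ z ∧ ∀ γ h, prev γ h ≤ z := by
    intro α prev
    obtain ⟨β, hβ⟩ := hc.exists_gt_of_mk_lt (s := range fun γ : Iio α => t (prev γ γ.2))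
      (mk_range_le.trans_lt (by simpa using Cardinal.mk_Iio_lt α))
    obtain ⟨z, hαz, hβz⟩ := directed_of (· ≤ ·) (f α) (f β)
    exact ⟨z, hαz, fun γ h => (ht _ β (hβ _ ⟨⟨γ, h⟩, rfl⟩).le).trans hβz⟩
  choose next hnext_ge hnext_prev using step
  let a := wellFounded_lt.fix next
  have ha : ∀ α, a α = next α fun γ _ => a γ := wellFounded_lt.fix_eq next
  refine ⟨a, fun γ α hγα => ?_, fun p => ?_⟩
  · rcases hγα.eq_or_lt with rfl | hγα
    · exact le_rfl
    · rw [ha α]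
      exact hnext_prev α (fun γ _ => a γ) γ hγα
  · obtain ⟨_, ⟨α, -, rfl⟩, hpα⟩ := hf univ IsCofinal.univ p
    exact ⟨a α, mem_range_self α, hpα.trans (ha α ▸ hnext_ge _ _)⟩

section Monotone

variable {ι P : Type*} [LinearOrder ι] [Preorder P] {a : ι → P}

theorem Monotone.exists_lt_apply (ha : Monotone a) (hcof : IsCofinal (range a)) {i : ι}
    (hi : ¬IsTop (a i)) : ∃ j, a i < a j := by
  obtain ⟨p, hp⟩ := not_forall.1 hi
  obtain ⟨_, ⟨k, rfl⟩, hpk⟩ := hcof p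
  refine ⟨max i k, lt_of_le_not_ge (ha (le_max_left i k)) fun h => hp ?_⟩
  exact hpk.trans ((ha (le_max_right i k)).trans h)

theorem Monotone.isTop_of_isCofinal_preimage (ha : Monotone a) (hcof : IsCofinal (range a))
    {x : P} (hx : IsCofinal (a ⁻¹' {x})) : IsTop x := by
  intro p
  obtain ⟨_, ⟨i, rfl⟩, hpi⟩ := hcof p
  obtain ⟨j, rfl, hij⟩ := hx i
  exact hpi.trans (ha hij)

end Monotone

theorem Antitone.exists_pairwise_disjoint_mk_range_le {ι B : Type*} [LinearOrder ι]
    [WellFoundedLT ι] [BooleanAlgebra B] {b : ι → B} (hb : Antitone b)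
    (hdrop : ∀ i, ∃ j, b j < b i) :
    ∃ S : Set B, (∀ x ∈ S, x ≠ ⊥) ∧ S.Pairwise (fun x y => x ⊓ y = ⊥) ∧ #(range b) ≤ #S := by
  choose m hm_lt hm_min using fun i => wellFounded_lt.has_min {j | b j < b i} (hdrop i)
  have hm_eq : ∀ i j, b i = b j → m i = m j := fun i j h =>
    le_antisymm (not_lt.1 (hm_min i _ (h ▸ hm_lt j))) (not_lt.1 (hm_min j _ (h ▸ hm_lt i)))
  set c : ι → B := fun i => b i \ b (m i)
  have hc_ne : ∀ i, c i ≠ ⊥ := fun i h => (hm_lt i).not_ge (sdiff_eq_bot_iff.1 h)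
  have hc_disj_of_lt : ∀ i j, b j < b i → c i ⊓ c j = ⊥ := by
    intro i j hji
    have hj : c j ≤ b (m i) := sdiff_le.trans (hb (not_lt.1 (hm_min i j hji)))
    exact disjoint_iff.1 (disjoint_sdiff_self_left.mono_right hj)
  have hc_disj : ∀ i j, b i ≠ b j → c i ⊓ c j = ⊥ := by
    intro i j hij
    rcases le_total i j with h | h
    · exact hc_disj_of_lt i j ((hb h).lt_of_ne hij.symm)
    · rw [inf_comm]
      exact hc_disj_of_lt j i ((hb h).lt_of_ne hij)
  have hbc : b.FactorsThrough c := fun i j hij => by_contra fun hne => hc_ne i (by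
    simpa [hij] using hc_disj i j hne)
  obtain ⟨e, hbe⟩ := (Function.factorsThrough_iff b).1 hbc
  refine ⟨range c, forall_mem_range.2 hc_ne, ?_, ?_⟩
  · rintro _ ⟨i, rfl⟩ _ ⟨j, rfl⟩ hij
    exact hc_disj i j fun h => hij (by simp only [c, h, hm_eq i j h])
  · rw [hbe, range_comp]
    exact mk_image_le

instance BAUltrafilter.isDirectedOrder_dual {B : Type*} [BooleanAlgebra B]
    (U : BAUltrafilter B) : IsDirectedOrder (↥U.carrier)ᵒᵈ where
  directed u v :=
    ⟨OrderDual.toDual ⟨_, U.inf_mem _ (OrderDual.ofDual u).2 _ (OrderDual.ofDual v).2⟩,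
      inf_le_left, inf_le_right⟩

theorem stmt5_general {B : Type*} [BooleanAlgebra B] (κ : Cardinal)
    (hcc : ∀ S : Set B, (∀ a ∈ S, a ≠ ⊥) → (S.Pairwise fun a b => a ⊓ b = ⊥) → #↥S < κ)
    (lam : Cardinal) (hlamreg : lam.IsRegular) (hlam : κ ≤ lam) :
    ¬∃ U : BAUltrafilter B, TukeyEquiv ((↥U.carrier)ᵒᵈ) lam.ord.ToType := by
  rintro ⟨U, ⟨f, hf⟩, ⟨g, hg⟩⟩
  have := Cardinal.noMaxOrder hlamreg.aleph0_le
  have hnotop (u : (↥U.carrier)ᵒᵈ) : ¬IsTop u := fun hu => not_isMax _ (hg.isTop_apply hu).isMax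
  obtain ⟨a, ha, hcof⟩ := hf.exists_monotone_isCofinal_range hlamreg
  let e : (↥U.carrier)ᵒᵈ → B := fun u => (OrderDual.ofDual u).1
  have hb : Antitone (e ∘ a) := fun _ _ h => ha h
  obtain ⟨S, hS_ne, hS_disj, hS⟩ := hb.exists_pairwise_disjoint_mk_range_le fun α =>
    ha.exists_lt_apply hcof (hnotop (a α))
  have hrange : #(range a) < lam := by
    rw [← mk_image_eq (f := e) (Subtype.val_injective.comp OrderDual.ofDual.injective),
      ← range_comp]
    exact (hS.trans_lt (hcc S hS_ne hS_disj)).trans_le hlam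
  obtain ⟨_, ⟨α, rfl⟩, hfiber⟩ := hlamreg.exists_isCofinal_preimage_singleton a hrange
  exact hnotop _ (ha.isTop_of_isCofinal_preimage hcof hfiber)

/-- If `κ` is regular uncountable and `B` satisfies the `κ`-chain condition
(every pairwise-disjoint set of nonzero elements has size `< κ`), then for every regular
`λ ≥ κ` there is no ultrafilter `U` on `B` with `(U,≥) ≡_T (λ,≤)`. -/
theorem stmt5 {B : Type*} [BooleanAlgebra B] (κ : Cardinal)
    (hreg : κ.IsRegular) (hunc : ℵ₀ < κ)
    (hcc : ∀ S : Set B, (∀ a ∈ S, a ≠ ⊥) → (S.Pairwise fun a b => a ⊓ b = ⊥) → #↥S < κ)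
    (lam : Cardinal) (hlamreg : lam.IsRegular) (hlam : κ ≤ lam) :
    ¬∃ U : BAUltrafilter B, TukeyEquiv ((↥U.carrier)ᵒᵈ) lam.ord.ToType :=
  stmt5_general κ hcc lam hlamreg hlam
end

section
/- Let L be a linear order with a least element. Then: (i) for every ultrafilter U on Intalg L, letting C = {t ∈ L : [t,→) ∈ U} be its corresponding initial chain, (U,⊇) ≡_T (cf C × ci(L∖C), ≤) with the coordinatewise order; and (ii) for every initial chain C ⊆ L there is an ultrafilter U on Intalg L with (U,⊇) ≡_T (cf C × ci(L∖C), ≤). Hence the Tukey types of ultrafilters on Intalg L are exactly the products (κ×μ,≤) over pairs (κ,μ) = (cf C, ci(L∖C)) for initial chains C of L. -/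
open Cardinal
open scoped Classical

/-- The Boolean subalgebra of the powerset algebra of `X` generated by a family `G`. -/
def genBoolAlg {X : Type*} (G : Set (Set X)) : Set (Set X) :=
  ⋂₀ {B : Set (Set X) | G ⊆ B ∧ ∅ ∈ B ∧ (∀ s ∈ B, sᶜ ∈ B) ∧ (∀ s ∈ B, ∀ t ∈ B, s ∩ t ∈ B)}

/-- The interval algebra of a linear order `L`: the subalgebra of the powerset algebra
generated by the half-lines `[a,→)`. -/
def intalg (L : Type*) [LinearOrder L] : Set (Set L) :=
  genBoolAlg {s : Set L | ∃ a : L, s = Set.Ici a}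

/-- The cofinality of a subset `C` of a preorder: the least cardinality of a cofinal
subset of `C`. -/
noncomputable def setCof {L : Type*} [Preorder L] (C : Set L) : Cardinal :=
  sInf {c : Cardinal | ∃ D : Set L, D ⊆ C ∧ c = #↥D ∧ ∀ x ∈ C, ∃ y ∈ D, x ≤ y}

/-- The coinitiality of a subset `X` of a preorder: the least cardinality of a coinitial
subset of `X`, with the convention that the coinitiality of `∅` is `1`. -/
noncomputable def setCoi {L : Type*} [Preorder L] (X : Set L) : Cardinal :=
  if X = ∅ then 1
  else sInf {c : Cardinal | ∃ D : Set L, D ⊆ X ∧ c = #↥D ∧ ∀ x ∈ X, ∃ y ∈ D, y ≤ x}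

/-!
Every set `s` of the interval algebra is decided near the cut `(C, L ∖ C)`: some box
`[a, b)` with `a ∈ C` and `b` a strict upper bound of `C` in `WithTop L` lies inside `s` or
inside its complement (the boxes are closed under intersection, and each generator `[t, →)` is
decided by whether `t ∈ C`). Hence an ultrafilter is generated by the boxes of its initial chain,
and conversely the boxes of any nonempty initial chain generate an ultrafilter. Indexing boxes
by a strictly increasing cofinal `cf C`-sequence in `C` and a strictly decreasing coinitial
`ci(L ∖ C)`-sequence of upper bounds gives a monotone map `cf C × ci(L ∖ C) → (U, ⊇)` with
cofinal range and bounded fibres, i.e. a Tukey equivalence.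
-/

section Tukey
variable {P Q : Type*} [Preorder P] [Preorder Q]

theorem tukeyLE_of_monotone {φ : Q → P} (hφ : Monotone φ) (hcof : ∀ p, ∃ q, p ≤ φ q) :
    TukeyLE P Q := by
  refine ⟨φ, fun X hX p => ?_⟩
  obtain ⟨q, hq⟩ := hcof p
  obtain ⟨x, hxX, hqx⟩ := hX q
  exact ⟨φ x, ⟨x, hxX, rfl⟩, hq.trans (hφ hqx)⟩

theorem tukeyLE_of_bddAbove {φ : P → Q} (hbdd : ∀ q, BddAbove {p | φ p ≤ q}) :
    TukeyLE P Q := by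
  choose ψ hψ using hbdd
  refine ⟨ψ, fun X hX p => ?_⟩
  obtain ⟨x, hxX, hpx⟩ := hX (φ p)
  exact ⟨ψ x, ⟨x, hxX, rfl⟩, hψ x hpx⟩

end Tukey

section GenBoolAlg
variable {X : Type*} {G : Set (Set X)} {s t : Set X}

theorem genBoolAlg_mem (hs : s ∈ G) : s ∈ genBoolAlg G :=
  fun _ hB => hB.1 hs

theorem genBoolAlg_compl (hs : s ∈ genBoolAlg G) : sᶜ ∈ genBoolAlg G :=
  fun B hB => hB.2.2.1 s (hs B hB)

theorem genBoolAlg_inter (hs : s ∈ genBoolAlg G) (ht : t ∈ genBoolAlg G) :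
    s ∩ t ∈ genBoolAlg G :=
  fun B hB => hB.2.2.2 s (hs B hB) t (ht B hB)

theorem genBoolAlg_induction (p : Set X → Prop) (hG : ∀ s ∈ G, p s) (hempty : p ∅)
    (hcompl : ∀ s, p s → p sᶜ) (hinter : ∀ s, p s → ∀ t, p t → p (s ∩ t)) :
    ∀ s ∈ genBoolAlg G, p s :=
  fun _ hs => hs {u | p u} ⟨hG, hempty, hcompl, hinter⟩

end GenBoolAlg

theorem Ici_mem_intalg {L : Type*} [LinearOrder L] (a : L) : Set.Ici a ∈ intalg L :=
  genBoolAlg_mem ⟨a, rfl⟩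

section Cofinality

theorem Order.exists_strictMono_isCofinal_range (α : Type*) [LinearOrder α] :
    ∃ f : (Order.cof α).ord.ToType → α, StrictMono f ∧ IsCofinal (Set.range f) := by
  obtain ⟨s, hs, hcard⟩ := Order.exists_cof_eq α
  obtain ⟨e⟩ : Nonempty ((Order.cof α).ord.ToType ≃ s) :=
    Cardinal.eq.1 (by rw [Cardinal.mk_ord_toType, hcard])
  -- fewer than `cof α` elements are never cofinal, so they have a strict upper bound
  have bound : ∀ (i : (Order.cof α).ord.ToType) (h : ∀ j, j < i → α),
      ∃ x, ∀ j (hj : j < i), h j hj < x := by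
    intro i h
    have hlt : #(Set.range fun j : Set.Iio i => h j j.2) < Order.cof α :=
      Cardinal.mk_range_le.trans_lt (by simpa using Cardinal.mk_Iio_lt i (by simp))
    obtain ⟨x, hx⟩ := not_isCofinal_iff.1 fun hc => (Order.cof_le hc).not_gt hlt
    exact ⟨x, fun j hj => hx _ ⟨⟨j, hj⟩, rfl⟩⟩
  choose ub hub using bound
  let f : (Order.cof α).ord.ToType → α :=
    IsWellFounded.fix (· < ·) fun i h => max (e i) (ub i h)
  have hf : ∀ i, f i = max (e i : α) (ub i fun j _ => f j) :=
    IsWellFounded.fix_eq (· < ·) _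
  refine ⟨f, fun j i hji => ?_, fun x => ?_⟩
  · rw [hf i]
    exact (hub i (fun j _ => f j) j hji).trans_le (le_max_right _ _)
  · obtain ⟨y, hy, hxy⟩ := hs x
    refine ⟨f (e.symm ⟨y, hy⟩), ⟨_, rfl⟩, ?_⟩
    rw [hf, e.apply_symm_apply]
    exact hxy.trans (le_max_left _ _)

theorem setCof_eq_cof {L : Type*} [Preorder L] (C : Set L) : setCof C = Order.cof C := by
  apply le_antisymm
  · obtain ⟨s, hs, hcard⟩ := Order.exists_cof_eq C
    refine csInf_le (OrderBot.bddBelow _) ⟨Subtype.val '' s, Subtype.coe_image_subset C s,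
      by rw [Cardinal.mk_image_eq Subtype.val_injective, hcard], fun x hx => ?_⟩
    obtain ⟨y, hy, hxy⟩ := hs ⟨x, hx⟩
    exact ⟨y, ⟨y, hy, rfl⟩, hxy⟩
  · refine le_csInf ⟨_, C, subset_rfl, rfl, fun x hx => ⟨x, hx, le_rfl⟩⟩ ?_
    rintro _ ⟨D, hDC, rfl, hD⟩
    refine (Order.cof_le (s := Subtype.val ⁻¹' D) fun x => ?_).trans
      (Cardinal.mk_preimage_of_injective _ _ Subtype.val_injective)
    obtain ⟨y, hy, hxy⟩ := hD x x.2
    exact ⟨⟨y, hDC hy⟩, hy, hxy⟩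

variable {L : Type*} [LinearOrder L]

theorem exists_strictMono_cofinal_seq (C : Set L) :
    ∃ f : (setCof C).ord.ToType → L,
      StrictMono f ∧ (∀ i, f i ∈ C) ∧ ∀ c ∈ C, ∃ i, c ≤ f i := by
  rw [setCof_eq_cof]
  obtain ⟨f, hf, hcof⟩ := Order.exists_strictMono_isCofinal_range C
  refine ⟨fun i => f i, (Subtype.strictMono_coe _).comp hf, fun i => (f i).2, fun c hc => ?_⟩
  obtain ⟨_, ⟨i, rfl⟩, hci⟩ := hcof ⟨c, hc⟩
  exact ⟨i, hci⟩

theorem exists_strictAnti_coinitial_seq {X : Set L} (hX : X.Nonempty) :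
    ∃ g : (setCoi X).ord.ToType → L,
      StrictAnti g ∧ (∀ i, g i ∈ X) ∧ ∀ x ∈ X, ∃ i, g i ≤ x := by
  rw [setCoi, if_neg hX.ne_empty]
  exact exists_strictMono_cofinal_seq (L := Lᵒᵈ) X

end Cofinality

section Cut
variable {L : Type*} [LinearOrder L] {C s t : Set L}

/-- The box `[a, b)`; `b = ⊤` gives the half-line `[a, →)`. -/
def icoTop (a : L) (b : WithTop L) : Set L :=
  ((↑) : L → WithTop L) ⁻¹' Set.Ico (↑a) b

theorem icoTop_top (a : L) : icoTop a ⊤ = Set.Ici a := by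
  ext x
  simp [icoTop]

theorem icoTop_coe (a b : L) : icoTop a b = Set.Ico a b := by
  ext x
  simp [icoTop]

theorem icoTop_subset_icoTop {a a' : L} {b b' : WithTop L} (ha : a' ≤ a) (hb : b ≤ b') :
    icoTop a b ⊆ icoTop a' b' :=
  Set.preimage_mono (Set.Ico_subset_Ico (WithTop.coe_le_coe.2 ha) hb)

theorem icoTop_subset_icoTop_iff {a a' : L} {b b' : WithTop L} (hab : (a : WithTop L) < b) :
    icoTop a b ⊆ icoTop a' b' ↔ a' ≤ a ∧ b ≤ b' := by
  have hrange : Set.Ico (a : WithTop L) b ⊆ Set.range ((↑) : L → WithTop L) := fun x hx =>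
    WithTop.ne_top_iff_exists.1 (hx.2.trans_le le_top).ne
  rw [icoTop, icoTop, Set.preimage_subset_preimage_iff hrange, Set.Ico_subset_Ico_iff hab,
    WithTop.coe_le_coe]

/-- `⊤` is a strict upper bound of every `C`, so that there are boxes around the cut even when
`C = L`. -/
def upperCut (C : Set L) : Set (WithTop L) :=
  {b | ∀ c ∈ C, (c : WithTop L) < b}

theorem top_mem_upperCut (C : Set L) : ⊤ ∈ upperCut C :=
  fun _ _ => WithTop.coe_lt_top _

theorem coe_mem_upperCut_iff (hC : IsLowerSet C) {b : L} :
    (b : WithTop L) ∈ upperCut C ↔ b ∉ C :=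
  ⟨fun h hb => lt_irrefl _ (h b hb),
    fun h _ hc => WithTop.coe_lt_coe.2 (lt_of_not_ge fun hbc => h (hC hbc hc))⟩

theorem exists_strictAnti_coinitial_upperCut (hC : IsLowerSet C) :
    ∃ g : (setCoi Cᶜ).ord.ToType → WithTop L,
      StrictAnti g ∧ (∀ i, g i ∈ upperCut C) ∧ ∀ b ∈ upperCut C, ∃ i, g i ≤ b := by
  rcases Cᶜ.eq_empty_or_nonempty with hempty | hne
  · rw [hempty, setCoi, if_pos rfl, Cardinal.ord_one]
    refine ⟨fun _ => ⊤, Subsingleton.strictAnti _, fun _ => top_mem_upperCut C, ?_⟩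
    rintro (_ | b) hb
    · exact ⟨default, le_rfl⟩
    · exact absurd (hempty ▸ (coe_mem_upperCut_iff hC).1 hb : b ∈ (∅ : Set L)) id
  · obtain ⟨g, hg, hgC, hcoi⟩ := exists_strictAnti_coinitial_seq hne
    refine ⟨fun i => g i, WithTop.coe_strictMono.comp_strictAnti hg,
      fun i => (coe_mem_upperCut_iff hC).2 (hgC i), ?_⟩
    rintro (_ | b) hb
    · obtain ⟨i, -⟩ := hcoi _ hne.some_mem
      exact ⟨i, le_top⟩
    · obtain ⟨i, hi⟩ := hcoi b ((coe_mem_upperCut_iff hC).1 hb)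
      exact ⟨i, WithTop.coe_le_coe.2 hi⟩

def IsCutNhd (C s : Set L) : Prop :=
  ∃ a ∈ C, ∃ b ∈ upperCut C, icoTop a b ⊆ s

theorem IsCutNhd.mono (hs : IsCutNhd C s) (hst : s ⊆ t) : IsCutNhd C t :=
  let ⟨a, ha, b, hb, hab⟩ := hs
  ⟨a, ha, b, hb, hab.trans hst⟩

theorem IsCutNhd.inter (hs : IsCutNhd C s) (ht : IsCutNhd C t) : IsCutNhd C (s ∩ t) := by
  obtain ⟨a, ha, b, hb, hs⟩ := hs
  obtain ⟨a', ha', b', hb', ht⟩ := ht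
  refine ⟨max a a', max_rec' C ha ha', min b b', min_rec' (upperCut C) hb hb', ?_⟩
  exact Set.subset_inter
    ((icoTop_subset_icoTop (le_max_left _ _) (min_le_left _ _)).trans hs)
    ((icoTop_subset_icoTop (le_max_right _ _) (min_le_right _ _)).trans ht)

theorem IsCutNhd.nonempty (hs : IsCutNhd C s) : s.Nonempty :=
  let ⟨a, ha, _, hb, hab⟩ := hs
  ⟨a, hab ⟨le_rfl, hb a ha⟩⟩

theorem isCutNhd_Ici_iff (hC : IsLowerSet C) {t : L} : IsCutNhd C (Set.Ici t) ↔ t ∈ C := by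
  refine ⟨fun ⟨a, ha, b, hb, hab⟩ => hC (hab ⟨le_rfl, hb a ha⟩) ha, fun ht => ?_⟩
  exact ⟨t, ht, ⊤, top_mem_upperCut C, (icoTop_top t).le⟩

theorem isCutNhd_compl_Ici (hC : IsLowerSet C) (hne : C.Nonempty) {t : L} (ht : t ∉ C) :
    IsCutNhd C (Set.Ici t)ᶜ := by
  obtain ⟨c, hc⟩ := hne
  refine ⟨c, hc, t, (coe_mem_upperCut_iff hC).2 ht, ?_⟩
  rw [icoTop_coe, Set.compl_Ici]
  exact Set.Ico_subset_Iio_self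

theorem isCutNhd_or_isCutNhd_compl (hC : IsLowerSet C) (hne : C.Nonempty) :
    ∀ s ∈ intalg L, IsCutNhd C s ∨ IsCutNhd C sᶜ := by
  refine genBoolAlg_induction _ ?_ ?_ ?_ ?_
  · rintro _ ⟨t, rfl⟩
    by_cases ht : t ∈ C
    · exact Or.inl ((isCutNhd_Ici_iff hC).2 ht)
    · exact Or.inr (isCutNhd_compl_Ici hC hne ht)
  · obtain ⟨c, hc⟩ := hne
    rw [Set.compl_empty]
    exact Or.inr ⟨c, hc, ⊤, top_mem_upperCut C, Set.subset_univ _⟩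
  · rintro s (hs | hs)
    · exact Or.inr (by rwa [compl_compl])
    · exact Or.inl hs
  · rintro s (hs | hs) t (ht | ht)
    · exact Or.inl (hs.inter ht)
    · exact Or.inr (ht.mono (Set.compl_subset_compl.2 Set.inter_subset_right))
    all_goals exact Or.inr (hs.mono (Set.compl_subset_compl.2 Set.inter_subset_left))

end Cut

namespace SetUltrafilter

theorem inter_nonempty {X : Type*} {B : Set (Set X)} (U : SetUltrafilter B) {a b : Set X}
    (ha : a ∈ U.carrier) (hb : b ∈ U.carrier) : (a ∩ b).Nonempty :=
  Set.nonempty_iff_ne_empty.2 fun h => U.empty_not_mem (h ▸ U.inter_mem a ha b hb)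

variable {L : Type*} [LinearOrder L] (U : SetUltrafilter (intalg L))

def initialChain : Set L :=
  {t | Set.Ici t ∈ U.carrier}

theorem isLowerSet_initialChain : IsLowerSet U.initialChain := fun _ b hba ha =>
  U.up_closed _ ha _ (Ici_mem_intalg b) (Set.Ici_subset_Ici.2 hba)

theorem bot_mem_initialChain [OrderBot L] : ⊥ ∈ U.initialChain := by
  refine (U.mem_or_compl_mem _ (Ici_mem_intalg ⊥)).resolve_right ?_
  rw [Set.Ici_bot, Set.compl_univ]
  exact U.empty_not_mem

theorem icoTop_mem {a : L} {b : WithTop L} (ha : a ∈ U.initialChain)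
    (hb : b ∈ upperCut U.initialChain) : icoTop a b ∈ U.carrier := by
  induction b with
  | top => rwa [icoTop_top]
  | coe b =>
    have hb : (Set.Ici b)ᶜ ∈ U.carrier := (U.mem_or_compl_mem _ (Ici_mem_intalg b)).resolve_left
      ((coe_mem_upperCut_iff U.isLowerSet_initialChain).1 hb)
    rw [icoTop_coe, ← Set.Ici_inter_Iio, ← Set.compl_Ici]
    exact U.inter_mem _ ha _ hb

theorem isCutNhd_of_mem [OrderBot L] {u : Set L} (hu : u ∈ U.carrier) :
    IsCutNhd U.initialChain u := by
  refine (isCutNhd_or_isCutNhd_compl U.isLowerSet_initialChain ⟨⊥, U.bot_mem_initialChain⟩ u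
    (U.subset_alg hu)).resolve_right fun ⟨a, ha, b, hb, hab⟩ => ?_
  obtain ⟨x, hxu, hx⟩ := U.inter_nonempty hu (U.icoTop_mem ha hb)
  exact hab hx hxu

theorem tukeyEquiv_cof_prod_coi [OrderBot L] :
    TukeyEquiv (↥U.carrier)ᵒᵈ
      ((setCof U.initialChain).ord.ToType × (setCoi U.initialChainᶜ).ord.ToType) := by
  obtain ⟨f, hf, hfC, hfcof⟩ := exists_strictMono_cofinal_seq U.initialChain
  obtain ⟨g, hg, hgC, hgcoi⟩ := exists_strictAnti_coinitial_upperCut U.isLowerSet_initialChain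
  let φ : (setCof U.initialChain).ord.ToType × (setCoi U.initialChainᶜ).ord.ToType →
      (↥U.carrier)ᵒᵈ := fun p =>
    OrderDual.toDual ⟨icoTop (f p.1) (g p.2), U.icoTop_mem (hfC p.1) (hgC p.2)⟩
  have hφ : Monotone φ := fun _ _ hpq =>
    icoTop_subset_icoTop (hf.monotone hpq.1) (hg.antitone hpq.2)
  have key : ∀ u, ∃ p, u ≤ φ p ∧ ∀ q, φ q ≤ u → q ≤ p := by
    intro u
    obtain ⟨a, ha, b, hb, hab⟩ := U.isCutNhd_of_mem (OrderDual.ofDual u).2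
    obtain ⟨i, hai⟩ := hfcof a ha
    obtain ⟨j, hjb⟩ := hgcoi b hb
    refine ⟨(i, j), (icoTop_subset_icoTop hai hjb).trans hab, fun q hq => ?_⟩
    obtain ⟨hqa, hbq⟩ := (icoTop_subset_icoTop_iff (hb a ha)).1 (hab.trans hq)
    exact ⟨hf.le_iff_le.1 (hqa.trans hai), hg.le_iff_ge.1 (hjb.trans hbq)⟩
  exact ⟨tukeyLE_of_monotone hφ fun u => (key u).imp fun _ => And.left,
    tukeyLE_of_bddAbove fun u => (key u).imp fun _ => And.right⟩

end SetUltrafilter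

def cutUltrafilter {L : Type*} [LinearOrder L] (C : Set L) (hC : IsLowerSet C)
    (hne : C.Nonempty) : SetUltrafilter (intalg L) where
  carrier := {s | s ∈ intalg L ∧ IsCutNhd C s}
  subset_alg _ hs := hs.1
  empty_not_mem h := Set.not_nonempty_empty h.2.nonempty
  inter_mem _ ha _ hb := ⟨genBoolAlg_inter ha.1 hb.1, ha.2.inter hb.2⟩
  up_closed _ ha _ hb hab := ⟨hb, ha.2.mono hab⟩
  mem_or_compl_mem s hs := (isCutNhd_or_isCutNhd_compl hC hne s hs).imp
    (⟨hs, ·⟩) (⟨genBoolAlg_compl hs, ·⟩)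

theorem initialChain_cutUltrafilter {L : Type*} [LinearOrder L] {C : Set L} (hC : IsLowerSet C)
    (hne : C.Nonempty) : (cutUltrafilter C hC hne).initialChain = C :=
  Set.ext fun t => ⟨fun h => (isCutNhd_Ici_iff hC).1 h.2,
    fun h => ⟨Ici_mem_intalg t, (isCutNhd_Ici_iff hC).2 h⟩⟩

/-- For a linear order `L` with a least element:
(i) every ultrafilter `U` on `Intalg L`, with corresponding initial chain
`C = {t : [t,→) ∈ U}`, satisfies `(U,⊇) ≡_T (cf C × ci(L∖C), ≤)`; and
(ii) for every initial chain `C ⊆ L` there is an ultrafilter realizing that type.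
Cardinals carry their ordinal order and the product is ordered coordinatewise. -/
theorem stmt9 {L : Type*} [LinearOrder L] [OrderBot L] :
    (∀ U : SetUltrafilter (intalg L),
      TukeyEquiv ((↥U.carrier)ᵒᵈ)
        ((setCof {t : L | Set.Ici t ∈ U.carrier}).ord.ToType ×
          (setCoi ({t : L | Set.Ici t ∈ U.carrier}ᶜ)).ord.ToType)) ∧
    (∀ C : Set L, C.Nonempty → IsLowerSet C →
      ∃ U : SetUltrafilter (intalg L),
        TukeyEquiv ((↥U.carrier)ᵒᵈ)
          ((setCof C).ord.ToType × (setCoi Cᶜ).ord.ToType)) := by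
  refine ⟨fun U => U.tukeyEquiv_cof_prod_coi, fun C hne hC => ⟨cutUltrafilter C hC hne, ?_⟩⟩
  have h := (cutUltrafilter C hC hne).tukeyEquiv_cof_prod_coi
  rwa [initialChain_cutUltrafilter] at h
end

section
/- Let T be a countably infinite tree with a least element (a single root). Then Treealg T has an ultrafilter U with (U,⊇) ≡_T ([ω]^{<ω},⊆). -/
open Cardinal

/-- The (pseudo-)tree algebra of a partial order `T`: the subalgebra of the powerset
algebra of `T` generated by the cones `T↑t = {s : s ≥ t}`. -/
def treealg (T : Type*) [PartialOrder T] : Set (Set T) :=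
  genBoolAlg {s : Set T | ∃ t : T, s = Set.Ici t}


section Aux

variable {T : Type*} [PartialOrder T]

lemma mem_treealg_Ici (t : T) : Set.Ici t ∈ treealg T :=
  Set.mem_sInter.2 fun _B hB => hB.1 ⟨t, rfl⟩

lemma treealg_empty : (∅ : Set T) ∈ treealg T :=
  Set.mem_sInter.2 fun _B hB => hB.2.1

lemma treealg_compl {b : Set T} (hb : b ∈ treealg T) : bᶜ ∈ treealg T :=
  Set.mem_sInter.2 fun B hB => hB.2.2.1 b (Set.mem_sInter.1 hb B hB)

lemma treealg_inter {a b : Set T} (ha : a ∈ treealg T) (hb : b ∈ treealg T) :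
    a ∩ b ∈ treealg T :=
  Set.mem_sInter.2 fun B hB => hB.2.2.2 a (Set.mem_sInter.1 ha B hB) b (Set.mem_sInter.1 hb B hB)

lemma treealg_univ : (Set.univ : Set T) ∈ treealg T := by
  have := treealg_compl (treealg_empty (T := T)); simpa using this

/-- basic filter set -/
def Dset (t : T) (S : Finset T) : Set T := Set.Ici t \ ⋃ s ∈ S, Set.Ici s

lemma mem_Dset {x t : T} {S : Finset T} :
    x ∈ Dset t S ↔ t ≤ x ∧ ∀ s ∈ S, ¬ s ≤ x := by
  simp [Dset]

lemma Dset_mem_treealg (t : T) (S : Finset T) : Dset t S ∈ treealg T := by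
  classical
  induction S using Finset.induction with
  | empty => simpa [Dset] using mem_treealg_Ici t
  | @insert a S ha ih =>
      have : Dset t (insert a S) = Dset t S ∩ (Set.Ici a)ᶜ := by
        ext x; simp [mem_Dset]; tauto
      rw [this]
      exact treealg_inter ih (treealg_compl (mem_treealg_Ici a))

lemma Dset_subset_Dset {t1 t2 : T} (h : t1 ≤ t2) {S1 S2 : Finset T} (hS : S1 ⊆ S2) :
    Dset t2 S2 ⊆ Dset t1 S1 := by
  intro x hx
  rw [mem_Dset] at hx ⊢
  exact ⟨h.trans hx.1, fun s hs => hx.2 s (hS hs)⟩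

/-- the filter determined by a downward closed chain `C` -/
def Ufam (C : Set T) : Set (Set T) :=
  {b | ∃ t ∈ C, ∃ S : Finset T, (∀ s ∈ S, s ∉ C) ∧ Dset t S ⊆ b}

variable {C : Set T} (hdown : ∀ ⦃a b : T⦄, a ≤ b → b ∈ C → a ∈ C)

lemma mem_Dset_self (hdown : ∀ ⦃a b : T⦄, a ≤ b → b ∈ C → a ∈ C)
    {t : T} (ht : t ∈ C) {S : Finset T} (hS : ∀ s ∈ S, s ∉ C) : t ∈ Dset t S :=
  mem_Dset.2 ⟨le_rfl, fun s hs hle => hS s hs (hdown hle ht)⟩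

lemma Ufam_up {a : Set T} (ha : a ∈ Ufam C) {b : Set T} (hab : a ⊆ b) : b ∈ Ufam C := by
  obtain ⟨t, ht, S, hS, hsub⟩ := ha
  exact ⟨t, ht, S, hS, hsub.trans hab⟩

lemma Ufam_inter (hchain : IsChain (· ≤ ·) C) {a b : Set T}
    (ha : a ∈ Ufam C) (hb : b ∈ Ufam C) : a ∩ b ∈ Ufam C := by
  classical
  obtain ⟨t1, ht1, S1, hS1, h1⟩ := ha
  obtain ⟨t2, ht2, S2, hS2, h2⟩ := hb
  have hS : ∀ s ∈ S1 ∪ S2, s ∉ C := by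
    intro s hs; rcases Finset.mem_union.1 hs with h | h
    exacts [hS1 s h, hS2 s h]
  rcases eq_or_ne t1 t2 with rfl | hne
  · exact ⟨t1, ht1, S1 ∪ S2, hS,
      Set.subset_inter
        ((Dset_subset_Dset le_rfl Finset.subset_union_left).trans h1)
        ((Dset_subset_Dset le_rfl Finset.subset_union_right).trans h2)⟩
  · rcases hchain.total ht1 ht2 with hle | hle
    · exact ⟨t2, ht2, S1 ∪ S2, hS,
        Set.subset_inter
          ((Dset_subset_Dset hle Finset.subset_union_left).trans h1)
          ((Dset_subset_Dset le_rfl Finset.subset_union_right).trans h2)⟩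
    · exact ⟨t1, ht1, S1 ∪ S2, hS,
        Set.subset_inter
          ((Dset_subset_Dset le_rfl Finset.subset_union_left).trans h1)
          ((Dset_subset_Dset hle Finset.subset_union_right).trans h2)⟩

end Aux

section Main

variable {T : Type*} [PartialOrder T] [OrderBot T] [Countable T] [Infinite T]

lemma main_lemma (C : Set T) (hchain : IsChain (· ≤ ·) C) (hbot : ⊥ ∈ C)
    (hdown : ∀ ⦃a b : T⦄, a ≤ b → b ∈ C → a ∈ C)
    (u : ℕ → Set T) (hu_alg : ∀ n, u n ∈ treealg T) (hu_mem : ∀ n, u n ∈ Ufam C)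
    (hu_fin : ∀ t ∈ C, ∀ S : Finset T, (∀ s ∈ S, s ∉ C) →
      {n : ℕ | Dset t S ⊆ u n}.Finite) :
    ∃ U : SetUltrafilter (treealg T), TukeyEquiv ((↥U.carrier)ᵒᵈ) (Finset ℕ) := by
  classical
  set Ca : Set (Set T) := treealg T ∩ Ufam C with hCa
  -- ultrafilter fields
  have hempty : (∅ : Set T) ∉ Ca := by
    rintro ⟨-, t, ht, S, hS, hsub⟩
    exact (hsub (mem_Dset_self hdown ht hS)).elim
  have hdec : ∀ b ∈ treealg T, b ∈ Ca ∨ bᶜ ∈ Ca := by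
    intro b hb
    have key : b ∈ Ufam C ∨ bᶜ ∈ Ufam C := by
      refine Set.mem_sInter.1 hb {x | x ∈ Ufam C ∨ xᶜ ∈ Ufam C} ⟨?_, ?_, ?_, ?_⟩
      · rintro s ⟨t, rfl⟩
        by_cases htC : t ∈ C
        · exact Or.inl ⟨t, htC, ∅, by simp, by simp [Dset]⟩
        · refine Or.inr ⟨⊥, hbot, {t}, by simpa using htC, ?_⟩
          intro x hx
          rw [mem_Dset] at hx
          exact fun hle => hx.2 t (Finset.mem_singleton_self t) hle
      · refine Or.inr ⟨⊥, hbot, ∅, by simp, ?_⟩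
        simp
      · intro s hs
        rcases hs with hs | hs
        · exact Or.inr (by simpa using hs)
        · exact Or.inl hs
      · intro s hs t ht
        rcases hs with hs | hs
        · rcases ht with ht | ht
          · exact Or.inl (Ufam_inter hchain hs ht)
          · refine Or.inr (Ufam_up ht ?_)
            intro x hx
            exact fun hmem => hx hmem.2
        · refine Or.inr (Ufam_up hs ?_)
          intro x hx
          exact fun hmem => hx hmem.1
    rcases key with h | h
    · exact Or.inl ⟨hb, h⟩
    · exact Or.inr ⟨treealg_compl hb, h⟩
  have hbiInter : ∀ (F : Finset ℕ) (v : ℕ → Set T), (∀ n, v n ∈ Ca) →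
      (⋂ n ∈ F, v n) ∈ Ca := by
    intro F v hv
    induction F using Finset.induction with
    | empty =>
        simp only [Finset.notMem_empty, Set.iInter_of_empty, Set.iInter_univ]
        exact ⟨treealg_univ, ⟨⊥, hbot, ∅, by simp, by simp⟩⟩
    | @insert a F ha ih =>
        rw [Finset.set_biInter_insert]
        exact ⟨treealg_inter (hv a).1 ih.1, Ufam_inter hchain (hv a).2 ih.2⟩
  refine ⟨⟨Ca, Set.inter_subset_left, hempty, ?_, ?_, hdec⟩, ?_, ?_⟩
  · exact fun a ha b hb => ⟨treealg_inter ha.1 hb.1, Ufam_inter hchain ha.2 hb.2⟩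
  · exact fun a ha b hb hab => ⟨hb, Ufam_up ha.2 hab⟩
  -- direction 1 : TukeyLE (↥Ca)ᵒᵈ (Finset ℕ)
  · obtain ⟨e, he⟩ := exists_surjective_nat T
    set r : T → ℕ := Function.surjInv he with hr
    set v : ℕ → Set T := fun n => if e n ∈ C then Set.Ici (e n) else (Set.Ici (e n))ᶜ with hv
    have hvCa : ∀ n, v n ∈ Ca := by
      intro n
      by_cases h : e n ∈ C
      · simp only [hv, if_pos h]
        exact ⟨mem_treealg_Ici _, ⟨e n, h, ∅, by simp, by simp [Dset]⟩⟩
      · simp only [hv, if_neg h]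
        refine ⟨treealg_compl (mem_treealg_Ici _), ⟨⊥, hbot, {e n}, by simpa using h, ?_⟩⟩
        intro x hx
        rw [mem_Dset] at hx
        exact fun hle => hx.2 (e n) (Finset.mem_singleton_self _) hle
    have hvr_pos : ∀ x ∈ C, v (r x) = Set.Ici x := by
      intro x hx
      simp only [hv, hr, Function.surjInv_eq he, if_pos hx]
    have hvr_neg : ∀ x ∉ C, v (r x) = (Set.Ici x)ᶜ := by
      intro x hx
      simp only [hv, hr, Function.surjInv_eq he, if_neg hx]
    refine ⟨fun F => OrderDual.toDual ⟨⋂ n ∈ F, v n, hbiInter F v hvCa⟩, ?_⟩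
    intro X hX
    intro b
    -- b : (↥Ca)ᵒᵈ ; need x ∈ image with b ≤ x
    obtain ⟨t, ht, S, hS, hsub⟩ := ((OrderDual.ofDual b : ↥Ca)).2.2
    set F0 : Finset ℕ := (insert t S).image r with hF0
    obtain ⟨F, hFX, hF0F⟩ := hX F0
    refine ⟨_, Set.mem_image_of_mem _ hFX, ?_⟩
    show (⋂ n ∈ F, v n) ⊆ ((OrderDual.ofDual b : ↥Ca) : Set T)
    refine Set.Subset.trans ?_ hsub
    intro x hx
    simp only [Set.mem_iInter] at hx
    rw [mem_Dset]
    constructor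
    · have hm : r t ∈ F := hF0F (Finset.mem_image_of_mem r (Finset.mem_insert_self t S))
      have := hx (r t) hm
      rwa [hvr_pos t ht] at this
    · intro s hs hle
      have hm : r s ∈ F := hF0F (Finset.mem_image_of_mem r (Finset.mem_insert_of_mem hs))
      have := hx (r s) hm
      rw [hvr_neg s (hS s hs)] at this
      exact this hle
  -- direction 2 : TukeyLE (Finset ℕ) (↥Ca)ᵒᵈ
  · have hfin : ∀ b : (↥Ca)ᵒᵈ, {n : ℕ | ((OrderDual.ofDual b : ↥Ca) : Set T) ⊆ u n}.Finite := by
      intro b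
      obtain ⟨t, ht, S, hS, hsub⟩ := ((OrderDual.ofDual b : ↥Ca)).2.2
      exact (hu_fin t ht S hS).subset (fun n hn => hsub.trans hn)
    refine ⟨fun b => (hfin b).toFinset, ?_⟩
    intro X hX F
    have hw : (⋂ n ∈ F, u n) ∈ Ca := hbiInter F u (fun n => ⟨hu_alg n, hu_mem n⟩)
    obtain ⟨x, hxX, hxw⟩ := hX (OrderDual.toDual ⟨⋂ n ∈ F, u n, hw⟩)
    refine ⟨_, Set.mem_image_of_mem _ hxX, ?_⟩
    intro n hn
    rw [Set.Finite.mem_toFinset]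
    have h1 : ((OrderDual.ofDual x : ↥Ca) : Set T) ⊆ ⋂ n ∈ F, u n := hxw
    exact h1.trans (Set.biInter_subset_of_mem hn)

end Main

/-- If `T` is a countably infinite tree (each set `{s : s ≤ t}` is
well-ordered, i.e. linearly ordered and well-founded) with a least element, then
`Treealg T` has an ultrafilter `U` with `(U,⊇) ≡_T ([ω]^{<ω},⊆)`
(realized as `Finset ℕ`). -/
theorem stmt11 {T : Type*} [PartialOrder T] [OrderBot T] [Countable T] [Infinite T]
    (htree : ∀ t : T, IsChain (· ≤ ·) {s : T | s ≤ t} ∧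
      {s : T | s ≤ t}.WellFoundedOn (· < ·)) :
    ∃ U : SetUltrafilter (treealg T), TukeyEquiv ((↥U.carrier)ᵒᵈ) (Finset ℕ) := by
  classical
  by_cases hdi : ∃ t : T, (Set.Ici t).Infinite ∧ ∀ s, t < s → (Set.Ici s).Finite
  · -- case A: infinitely many immediate successors above t
    obtain ⟨t, htinf, hfin⟩ := hdi
    set M : Set T := {m | t < m ∧ ∀ y, t < y → y ≤ m → y = m} with hM
    have hcover : ∀ x, t < x → ∃ m ∈ M, m ≤ x := by
      intro x hx
      have hwf' := Set.wellFoundedOn_iff.1 (htree x).2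
      obtain ⟨m, hmA, hmin⟩ := hwf'.has_min {y | t < y ∧ y ≤ x} ⟨x, hx, le_rfl⟩
      refine ⟨m, ⟨hmA.1, ?_⟩, hmA.2⟩
      intro y hty hym
      by_contra hne
      exact hmin y ⟨hty, hym.trans hmA.2⟩ ⟨lt_of_le_of_ne hym hne, hym.trans hmA.2, hmA.2⟩
    have hMinf : M.Infinite := by
      intro hMfin
      have hIoi : (Set.Ioi t).Infinite := by
        intro hIo
        have : Set.Ici t = insert t (Set.Ioi t) := by
          ext x
          simp only [Set.mem_Ici, Set.mem_insert_iff, Set.mem_Ioi]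
          constructor
          · intro h; rcases eq_or_lt_of_le h with h | h
            · exact Or.inl h.symm
            · exact Or.inr h
          · rintro (rfl | h); exacts [le_rfl, h.le]
        exact htinf (by rw [this]; exact hIo.insert t)
      have hsub : Set.Ioi t ⊆ ⋃ m ∈ M, Set.Ici m := by
        intro x hx
        obtain ⟨m, hm, hmx⟩ := hcover x hx
        exact Set.mem_biUnion hm hmx
      exact hIoi ((hMfin.biUnion (fun m hm => hfin m hm.1)).subset hsub)
    set mn : ℕ → T := fun n => ((Set.Infinite.natEmbedding M hMinf) n : T) with hmn
    have hmnM : ∀ n, mn n ∈ M := fun n => ((Set.Infinite.natEmbedding M hMinf) n).2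
    have hmninj : Function.Injective mn :=
      Subtype.val_injective.comp (Set.Infinite.natEmbedding M hMinf).injective
    refine main_lemma (Set.Iic t) ?_ bot_le (fun a b hab hb => hab.trans hb)
      (fun n => (Set.Ici (mn n))ᶜ) (fun n => treealg_compl (mem_treealg_Ici _)) ?_ ?_
    · exact (htree t).1
    · intro n
      refine ⟨⊥, bot_le, {mn n}, ?_, ?_⟩
      · intro s hs
        rw [Finset.mem_singleton] at hs
        subst hs
        exact fun hle => absurd ((hmnM n).1.trans_le hle) (lt_irrefl t)
      · intro x hx
        rw [mem_Dset] at hx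
        exact fun hle => hx.2 (mn n) (Finset.mem_singleton_self _) hle
    · intro t' ht' S hS
      have hsubset : {n : ℕ | Dset t' S ⊆ (Set.Ici (mn n))ᶜ} ⊆ mn ⁻¹' (S : Set T) := by
        intro n hn
        have hnot : mn n ∉ Dset t' S := fun h => (hn h) le_rfl
        rw [mem_Dset] at hnot
        push_neg at hnot
        have hle : t' ≤ mn n := le_trans ht' (hmnM n).1.le
        obtain ⟨s, hsS, hsle⟩ := hnot hle
        have hst : ¬ s ≤ t := hS s hsS
        have hts : t < s := by
          rcases eq_or_ne s t with rfl | hne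
          · exact absurd le_rfl hst
          · rcases (htree (mn n)).1 hsle (hmnM n).1.le hne with h | h
            · exact absurd h hst
            · exact lt_of_le_of_ne h hne.symm
        have : s = mn n := (hmnM n).2 s hts hsle
        simpa [this] using hsS
      exact (S.finite_toSet.preimage (hmninj.injOn)).subset hsubset
  · -- case B: an infinite chain
    push_neg at hdi
    have h0 : (Set.Ici (⊥ : T)).Infinite := by
      rw [Set.Ici_bot]; exact Set.infinite_univ
    choose nxt hlt hinf using
      fun x : {x : T // (Set.Ici x).Infinite} => hdi x.1 x.2
    let G : ℕ → {x : T // (Set.Ici x).Infinite} :=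
      fun n => Nat.rec ⟨⊥, h0⟩ (fun _ p => ⟨nxt p, hinf p⟩) n
    set g : ℕ → T := fun n => (G n).1 with hgdef
    have hstep : ∀ n, g n < g (n + 1) := fun n => hlt (G n)
    have hg : StrictMono g := strictMono_nat_of_lt_succ hstep
    set C : Set T := {x | ∃ n, x ≤ g n} with hC
    have hdown : ∀ ⦃a b : T⦄, a ≤ b → b ∈ C → a ∈ C := by
      rintro a b hab ⟨n, hn⟩; exact ⟨n, hab.trans hn⟩
    refine main_lemma C ?_ ⟨0, bot_le⟩ hdown (fun n => Set.Ici (g n))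
      (fun n => mem_treealg_Ici _) ?_ ?_
    · intro x hx y hy hne
      obtain ⟨n, hn⟩ := hx
      obtain ⟨m, hm⟩ := hy
      rcases le_total n m with h | h
      · exact (htree (g m)).1 (hn.trans (hg.monotone h)) hm hne
      · exact (htree (g n)).1 hn (hm.trans (hg.monotone h)) hne
    · intro n
      exact ⟨g n, ⟨n, le_rfl⟩, ∅, by simp, by simp [Dset]⟩
    · intro t' ht' S hS
      obtain ⟨k, hk⟩ := ht'
      have hsubset : {n : ℕ | Dset t' S ⊆ Set.Ici (g n)} ⊆ Set.Iic k := by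
        intro n hn
        have ht'mem : t' ∈ Dset t' S := by
          rw [mem_Dset]
          exact ⟨le_rfl, fun s hsS hsle => hS s hsS (hdown hsle ⟨k, hk⟩)⟩
        have : g n ≤ t' := hn ht'mem
        exact hg.le_iff_le.1 (this.trans hk)
      exact (Set.finite_Iic k).subset hsubset
end

section
/- Let T be an uncountable pseudo-tree with a least element. Then there is an ultrafilter U on Treealg T whose Tukey type is strictly below the maximum: (U,⊇) ≤_T ([|T|]^{<ω},⊆) but ([|T|]^{<ω},⊆) is not Tukey reducible to (U,⊇). -/
open Cardinal

section ChainLemma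

/-- In a family indexed by an uncountable type whose values are pairwise comparable,
some value has infinitely many indices mapped at or below it. -/
lemma chain_small {α β : Type*} [Uncountable α] [PartialOrder β]
    (φ : α → β) (hcmp : ∀ a b : α, φ a ≤ φ b ∨ φ b ≤ φ a) :
    ∃ a₀ : α, {a | φ a ≤ φ a₀}.Infinite := by
  by_contra h
  push_neg at h
  have hcount : ∀ n : ℕ, {a | ({b | φ b ≤ φ a}).ncard = n}.Countable := by
    intro n
    rcases Set.eq_empty_or_nonempty {a | ({b | φ b ≤ φ a}).ncard = n} with he | ⟨a₀, ha₀⟩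
    · simp [he]
    · refine Set.Countable.mono ?_ (h a₀).countable
      intro a ha
      rcases hcmp a a₀ with hle | hle
      · exact hle
      · have hsub : {b | φ b ≤ φ a₀} ⊆ {b | φ b ≤ φ a} := fun b hb => hb.trans hle
        have heq : {b | φ b ≤ φ a₀} = {b | φ b ≤ φ a} :=
          Set.eq_of_subset_of_ncard_le hsub (by rw [Set.mem_setOf_eq.mp ha, Set.mem_setOf_eq.mp ha₀]) (h a)
        have hmem : a ∈ {b | φ b ≤ φ a} := le_refl _
        rw [← heq] at hmem
        exact hmem
  have huniv : (Set.univ : Set α).Countable := by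
    have he : (Set.univ : Set α) = ⋃ n : ℕ, {a | ({b | φ b ≤ φ a}).ncard = n} := by
      ext a; simp
    rw [he]
    exact Set.countable_iUnion hcount
  exact (Set.not_countable_univ_iff.mpr ‹Uncountable α›) huniv

end ChainLemma

section GenAlg

variable {X : Type*}

lemma gen_subset_genBoolAlg (G : Set (Set X)) : G ⊆ genBoolAlg G := by
  intro s hs B hB
  exact hB.1 hs

lemma compl_mem_genBoolAlg {G : Set (Set X)} {s : Set X} (h : s ∈ genBoolAlg G) :
    sᶜ ∈ genBoolAlg G := by
  intro B hB
  exact hB.2.2.1 s (h B hB)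

lemma inter_mem_genBoolAlg {G : Set (Set X)} {s t : Set X} (hs : s ∈ genBoolAlg G)
    (ht : t ∈ genBoolAlg G) : s ∩ t ∈ genBoolAlg G := by
  intro B hB
  exact hB.2.2.2 s (hs B hB) t (ht B hB)

end GenAlg

lemma Ici_mem_treealg {T : Type*} [PartialOrder T] (t : T) : Set.Ici t ∈ treealg T :=
  gen_subset_genBoolAlg _ ⟨t, rfl⟩

/-- If `T` is an uncountable pseudo-tree (each set `{s : s ≤ t}` linearly
ordered) with a least element, then some ultrafilter `U` on `Treealg T` has Tukey type
strictly below the maximum `([|T|]^{<ω},⊆)` (realized as `Finset T`). -/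
theorem stmt14 {T : Type*} [PartialOrder T] [OrderBot T]
    (hpt : ∀ t : T, IsChain (· ≤ ·) {s : T | s ≤ t}) (hbig : ℵ₀ < #T) :
    ∃ U : SetUltrafilter (treealg T),
      TukeyLE ((↥U.carrier)ᵒᵈ) (Finset T) ∧ ¬TukeyLE (Finset T) ((↥U.carrier)ᵒᵈ) := by
  haveI : Uncountable T := Cardinal.aleph0_lt_mk_iff.mp hbig
  -- a maximal chain containing ⊥
  obtain ⟨V, hVmax, hbotV⟩ : ∃ V : Set T, IsMaxChain (· ≤ ·) V ∧ (⊥ : T) ∈ V := by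
    have hsing : IsChain (· ≤ ·) ({⊥} : Set T) := Set.Subsingleton.isChain (by simp)
    obtain ⟨M, hM, hsub⟩ := hsing.exists_maxChain
    exact ⟨M, hM, hsub rfl⟩
  have hVchain : IsChain (· ≤ ·) V := hVmax.1
  have hVcmp : ∀ a ∈ V, ∀ b ∈ V, a ≤ b ∨ b ≤ a := by
    intro a ha b hb
    by_cases hab : a = b
    · exact Or.inl (le_of_eq hab)
    · exact hVchain ha hb hab
  -- every s ∉ V has v ∈ V with disjoint cones
  have hinc : ∀ s : T, s ∉ V → ∃ v ∈ V, Set.Ici v ∩ Set.Ici s = ∅ := by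
    intro s hsV
    have hnot : ¬ IsChain (· ≤ ·) (V ∪ Set.Iic s) := by
      intro hch
      have heq := hVmax.2 hch Set.subset_union_left
      apply hsV
      rw [heq]
      exact Set.mem_union_right _ (le_refl s)
    have hex : ∃ v ∈ V, ∀ x : T, ¬(v ≤ x ∧ s ≤ x) := by
      by_contra hA
      push_neg at hA
      apply hnot
      have key : ∀ c ∈ V, ∀ d : T, d ≤ s → c ≤ d ∨ d ≤ c := by
        intro c hc d hd
        obtain ⟨x, hcx, hsx⟩ := hA c hc
        by_cases hcd : c = d
        · exact Or.inl (le_of_eq hcd)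
        · exact hpt x hcx (hd.trans hsx) hcd
      intro a ha b hb hab
      rcases ha with haV | haS
      · rcases hb with hbV | hbS
        · exact hVchain haV hbV hab
        · exact key a haV b hbS
      · rcases hb with hbV | hbS
        · rcases key b hbV a haS with h | h
          · exact Or.inr h
          · exact Or.inl h
        · exact hpt s haS hbS hab
    obtain ⟨v, hvV, hv⟩ := hex
    refine ⟨v, hvV, ?_⟩
    ext x
    simp only [Set.mem_inter_iff, Set.mem_Ici, Set.mem_empty_iff_false, iff_false, not_and]
    intro h1 h2
    exact hv x ⟨h1, h2⟩
  -- the generating filter predicate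
  set U0 : Set (Set T) := {b | ∃ t ∈ V, Set.Ici t ⊆ b} with hU0def
  have hU0inter : ∀ a ∈ U0, ∀ b ∈ U0, a ∩ b ∈ U0 := by
    rintro a ⟨t, htV, hta⟩ b ⟨t', ht'V, ht'b⟩
    rcases hVcmp t htV t' ht'V with h | h
    · exact ⟨t', ht'V, Set.subset_inter ((Set.Ici_subset_Ici.mpr h).trans hta) ht'b⟩
    · exact ⟨t, htV, Set.subset_inter hta ((Set.Ici_subset_Ici.mpr h).trans ht'b)⟩
  have hdecided : ∀ b ∈ treealg T, b ∈ U0 ∨ bᶜ ∈ U0 := by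
    intro b hb
    have hmem : b ∈ {c : Set T | c ∈ U0 ∨ cᶜ ∈ U0} := by
      apply hb
      refine ⟨?_, ?_, ?_, ?_⟩
      · rintro s ⟨t, rfl⟩
        by_cases htV : t ∈ V
        · exact Or.inl ⟨t, htV, subset_rfl⟩
        · obtain ⟨v, hvV, hdis⟩ := hinc t htV
          refine Or.inr ⟨v, hvV, ?_⟩
          intro x hx
          simp only [Set.mem_compl_iff, Set.mem_Ici]
          intro hxt
          have hxm : x ∈ Set.Ici v ∩ Set.Ici t := ⟨hx, hxt⟩
          rw [hdis] at hxm; exact hxm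
      · exact Or.inr ⟨⊥, hbotV, by simp⟩
      · rintro s (hs | hs)
        · exact Or.inr (by rwa [compl_compl])
        · exact Or.inl hs
      · rintro s hs t ht
        rcases hs with hs | hs
        · rcases ht with ht | ht
          · exact Or.inl (hU0inter s hs t ht)
          · obtain ⟨v, hv, hsub⟩ := ht
            exact Or.inr ⟨v, hv, hsub.trans (Set.compl_subset_compl.mpr Set.inter_subset_right)⟩
        · obtain ⟨v, hv, hsub⟩ := hs
          exact Or.inr ⟨v, hv, hsub.trans (Set.compl_subset_compl.mpr Set.inter_subset_left)⟩
    exact hmem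
  -- build the ultrafilter
  refine ⟨⟨{b | b ∈ treealg T ∧ b ∈ U0}, fun b hb => hb.1, ?_, ?_, ?_, ?_⟩, ?_, ?_⟩
  · rintro ⟨-, t, htV, hsub⟩
    exact hsub Set.self_mem_Ici
  · rintro a ⟨haA, haU⟩ b ⟨hbA, hbU⟩
    exact ⟨inter_mem_genBoolAlg haA hbA, hU0inter a haU b hbU⟩
  · rintro a ⟨haA, t, htV, hsub⟩ b hbA hab
    exact ⟨hbA, t, htV, hsub.trans hab⟩
  · intro b hb
    rcases hdecided b hb with h | h
    · exact Or.inl ⟨hb, h⟩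
    · exact Or.inr ⟨compl_mem_genBoolAlg hb, h⟩
  -- Part 1: U ≤_T Finset T
  · haveI := Classical.decEq T
    have hc : ∀ G : Finset T, ∃ v, v ∈ V ∧ ∀ t ∈ G, t ∈ V → t ≤ v := by
      intro G
      induction G using Finset.induction_on with
      | empty => exact ⟨⊥, hbotV, by simp⟩
      | @insert a G ha ih =>
        obtain ⟨v, hvV, hv⟩ := ih
        by_cases haV : a ∈ V
        · rcases hVcmp a haV v hvV with h | h
          · refine ⟨v, hvV, ?_⟩
            intro t htG htV
            rcases Finset.mem_insert.mp htG with rfl | htG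
            · exact h
            · exact hv t htG htV
          · refine ⟨a, haV, ?_⟩
            intro t htG htV
            rcases Finset.mem_insert.mp htG with rfl | htG
            · exact le_refl t
            · exact (hv t htG htV).trans h
        · refine ⟨v, hvV, ?_⟩
          intro t htG htV
          rcases Finset.mem_insert.mp htG with rfl | htG
          · exact absurd htV haV
          · exact hv t htG htV
    choose c hcV hcub using hc
    refine ⟨fun G => OrderDual.toDual ⟨Set.Ici (c G), Ici_mem_treealg _, c G, hcV G, subset_rfl⟩, ?_⟩
    intro X hX u
    obtain ⟨t, htV, htu⟩ := (OrderDual.ofDual u).2.2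
    obtain ⟨G, hGX, hG⟩ := hX {t}
    refine ⟨_, Set.mem_image_of_mem _ hGX, ?_⟩
    have htG : t ∈ G := Finset.singleton_subset_iff.mp hG
    show Set.Ici (c G) ⊆ (OrderDual.ofDual u).1
    exact (Set.Ici_subset_Ici.mpr (hcub G t htG htV)).trans htu
  -- Part 2: Finset T is not Tukey below U
  · rintro ⟨f, hf⟩
    have hut : ∀ t : T, ∃ u, ∀ x, u ≤ x → t ∈ f x := by
      intro t
      by_contra hcon
      push_neg at hcon
      have hXcof : TCofinal {x | t ∉ f x} := by
        intro p
        obtain ⟨x, hpx, hx⟩ := hcon p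
        exact ⟨x, hx, hpx⟩
      obtain ⟨G, hGim, hG⟩ := hf _ hXcof {t}
      obtain ⟨x, hx, rfl⟩ := hGim
      exact hx (Finset.singleton_subset_iff.mp hG)
    choose uu huu using hut
    have hv : ∀ t : T, ∃ v, v ∈ V ∧ Set.Ici v ⊆ (OrderDual.ofDual (uu t)).1 := by
      intro t
      obtain ⟨w, hwV, hw⟩ := (OrderDual.ofDual (uu t)).2.2
      exact ⟨w, hwV, hw⟩
    choose v hvV hvsub using hv
    obtain ⟨t₀, hinf⟩ := chain_small v (fun a b => hVcmp _ (hvV a) _ (hvV b))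
    set ustar := OrderDual.toDual
      (⟨Set.Ici (v t₀), Ici_mem_treealg _, v t₀, hvV t₀, subset_rfl⟩ :
        {b : Set T | b ∈ treealg T ∧ b ∈ U0}) with hustar
    have hsubst : {a | v a ≤ v t₀} ⊆ ↑(f ustar) := by
      intro a ha
      apply huu a
      show Set.Ici (v t₀) ⊆ (OrderDual.ofDual (uu a)).1
      exact (Set.Ici_subset_Ici.mpr ha).trans (hvsub a)
    exact hinf (Set.Finite.subset (f ustar).finite_toSet hsubst)
end

section
/- Let T be a pseudo-tree, let C be an initial chain in T, and let S be any set of approximate immediate successors of C. Then there exist a cardinal λ, cardinals θ_α (α < λ) each equal to 1 or an infinite regular cardinal, and a λ-fan Λ = {t^α_β : α < λ, β < θ_α} above C which is coinitial in S: every element of Λ lies below some element of S, and every element of S lies above some element of Λ. -/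
open Cardinal

/-- `R` is a set of approximate immediate successors of the initial chain `C`:
every `r ∈ R` is above `C` (i.e. `c < r` for all `c ∈ C`), and every element above `C`
is above some member of `R`. -/
def ApproxImmSucc {T : Type*} [Preorder T] (C R : Set T) : Prop :=
  (∀ r ∈ R, ∀ c ∈ C, c < r) ∧ ∀ s : T, (∀ c ∈ C, c < s) → ∃ r ∈ R, r ≤ s

/-- A `λ`-fan above an initial chain `C` in a pseudo-tree, presented as a doubly indexed
family `t α β` (`α < λ`, `β < θ α`): the family is a set of approximate immediate
successors of `C`; each `θ α` is `1` or an infinite regular cardinal; each column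
`(t α β)_{β < θ α}` is strictly decreasing and coinitial in
`{s : C < s ≤ t α 0}` (equivalently, in the set of elements above `C` lying below some
member of the column); and elements of distinct columns are incomparable. -/
structure IsLambdaFan {T : Type*} [PartialOrder T] (C : Set T) (lam : Cardinal)
    (θ : lam.ord.ToType → Cardinal)
    (t : (α : lam.ord.ToType) → (θ α).ord.ToType → T) : Prop where
  above : ∀ α β, ∀ c ∈ C, c < t α β
  approx : ∀ s : T, (∀ c ∈ C, c < s) → ∃ α β, t α β ≤ s
  theta : ∀ α, θ α = 1 ∨ (ℵ₀ ≤ θ α ∧ (θ α).IsRegular)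
  strictAnti : ∀ α, StrictAnti (t α)
  coinitial : ∀ α, ∀ s : T, (∀ c ∈ C, c < s) → (∃ β, s ≤ t α β) → ∃ β, t α β ≤ s
  incomp : ∀ α α', α ≠ α' → ∀ β β', ¬t α β ≤ t α' β' ∧ ¬t α' β' ≤ t α β

universe u

/-! Above `C`, "having a common lower bound above `C`" is an equivalence relation on `S`: two
lower bounds of the same point are comparable in a pseudo-tree. Choose one representative `r`
per class. The elements strictly above `C` and below `r` form a chain, and every linear order
has a strictly monotone cofinal sequence indexed by its cofinality, which is `1` or regular;
applied to the reversed chains this yields the columns of the fan. Two elements of different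
columns that were comparable would put their representatives into the same class. -/

open Order Set

theorem exists_isCofinal_wellFoundedLT (α : Type*) [LinearOrder α] :
    ∃ s : Set α, IsCofinal s ∧ WellFoundedLT s := by
  refine ⟨_, isCofinal_setOfPred_imp_lt WellOrderingRel, ⟨Subrelation.wf ?_
    (InvImage.wf Subtype.val WellOrderingRel.isWellOrder.wf)⟩⟩
  -- on the records of a well-ordering, `<` is contained in that well-ordering
  intro a b hab
  rcases trichotomous_of WellOrderingRel a.1 b.1 with h | h | h
  · exact h
  · exact absurd (Subtype.ext h) hab.ne
  · exact absurd (a.2 b h) hab.not_gt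

theorem Order.cof_eq_one_or_isRegular (α : Type*) [LinearOrder α] [Nonempty α] :
    cof α = 1 ∨ (cof α).IsRegular := by
  obtain ⟨s, hs, _⟩ := exists_isCofinal_wellFoundedLT α
  refine or_iff_not_imp_left.2 fun h1 => ⟨?_, ?_⟩
  · exact aleph0_le_cof_iff.2 ((Cardinal.one_le_iff_ne_zero.2 cof_ne_zero).lt_of_ne' h1)
  · rw [← cof_eq_of_isCofinal hs, cof_ord_cof]

theorem exists_strictMono_ord_cof_isCofinal_range (α : Type u) [LinearOrder α] :
    ∃ f : (cof α).ord.ToType → α, StrictMono f ∧ IsCofinal (range f) := by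
  obtain ⟨s, hs, _⟩ := exists_isCofinal_wellFoundedLT α
  obtain ⟨t, ht, htype⟩ := Ordinal.exists_ord_cof_eq s
  rw [cof_eq_of_isCofinal hs, ← Ordinal.type_toType (cof α).ord] at htype
  let e : (cof α).ord.ToType ≃o t := .ofRelIsoLT (Ordinal.type_eq.1 htype.symm).some
  refine ⟨fun i => (e i).1.1, fun i j hij => e.strictMono hij, fun a => ?_⟩
  obtain ⟨x, hx, hax⟩ := hs a
  obtain ⟨y, hy, hxy⟩ := ht ⟨x, hx⟩
  exact ⟨_, ⟨e.symm ⟨y, hy⟩, by simp⟩, hax.trans hxy⟩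

theorem IsChain.exists_strictAnti_coinitial {T : Type u} [PartialOrder T] {B : Set T}
    (hB : IsChain (· ≤ ·) B) (hne : B.Nonempty) :
    ∃ θ : Cardinal.{u}, (θ = 1 ∨ θ.IsRegular) ∧ ∃ f : θ.ord.ToType → T,
      (∀ β, f β ∈ B) ∧ StrictAnti f ∧ ∀ b ∈ B, ∃ β, f β ≤ b := by
  classical
  let := hB.linearOrder
  have : Nonempty B := hne.to_subtype
  obtain ⟨f, hf_mono, hf_cof⟩ := exists_strictMono_ord_cof_isCofinal_range Bᵒᵈ
  refine ⟨_, cof_eq_one_or_isRegular Bᵒᵈ, fun β => (OrderDual.ofDual (f β)).1,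
    fun β => (f β).2, fun i j hij => hf_mono hij, fun b hb => ?_⟩
  obtain ⟨_, ⟨β, rfl⟩, hβ⟩ := hf_cof (OrderDual.toDual ⟨b, hb⟩)
  exact ⟨β, hβ⟩

theorem Setoid.exists_ord_toType_transversal {X : Type u} (r : Setoid X) :
    ∃ (lam : Cardinal.{u}) (rep : lam.ord.ToType → X),
      (∀ x, ∃ α, r (rep α) x) ∧ ∀ α α', r (rep α) (rep α') → α = α' := by
  obtain ⟨e⟩ : Nonempty ((#(Quotient r)).ord.ToType ≃ Quotient r) := Cardinal.eq.1 (by simp)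
  refine ⟨_, fun α => (e α).out, fun x => ⟨e.symm ⟦x⟧, ?_⟩, fun α α' h => ?_⟩
  · exact Quotient.exact (by simp)
  · exact e.injective (by simpa using Quotient.sound h)

section PseudoTree

variable {T : Type u} [PartialOrder T]

def SameBranchAbove (C : Set T) (x y : T) : Prop :=
  ∃ u, (∀ c ∈ C, c < u) ∧ u ≤ x ∧ u ≤ y

theorem SameBranchAbove.trans (hpt : ∀ x : T, IsChain (· ≤ ·) {s : T | s ≤ x}) {C : Set T}
    {x y z : T} (hxy : SameBranchAbove C x y) (hyz : SameBranchAbove C y z) :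
    SameBranchAbove C x z := by
  obtain ⟨u, hu, hux, huy⟩ := hxy
  obtain ⟨v, hv, hvy, hvz⟩ := hyz
  rcases (hpt y).total huy hvy with huv | hvu
  · exact ⟨u, hu, hux, huv.trans hvz⟩
  · exact ⟨v, hv, hvu.trans hux, hvz⟩

def sameBranchSetoid (hpt : ∀ x : T, IsChain (· ≤ ·) {s : T | s ≤ x}) (C S : Set T)
    (hS : ∀ s ∈ S, ∀ c ∈ C, c < s) : Setoid S where
  r x y := SameBranchAbove C x y
  iseqv :=
    { refl := fun x => ⟨x, hS x x.2, le_rfl, le_rfl⟩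
      symm := fun ⟨u, hu, hux, huy⟩ => ⟨u, hu, huy, hux⟩
      trans := SameBranchAbove.trans hpt }

theorem isChain_above_le (hpt : ∀ x : T, IsChain (· ≤ ·) {s : T | s ≤ x}) (C : Set T) (r : T) :
    IsChain (· ≤ ·) {s | (∀ c ∈ C, c < s) ∧ s ≤ r} :=
  (hpt r).mono fun _ hs => hs.2

end PseudoTree

theorem stmt16_general {T : Type u} [PartialOrder T]
    (hpt : ∀ x : T, IsChain (· ≤ ·) {s : T | s ≤ x})
    (C : Set T)
    (S : Set T) (hS : ApproxImmSucc C S) :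
    ∃ (lam : Cardinal.{u}) (θ : lam.ord.ToType → Cardinal.{u})
      (t : (α : lam.ord.ToType) → (θ α).ord.ToType → T),
      IsLambdaFan C lam θ t ∧
        (∀ α β, ∃ s ∈ S, t α β ≤ s) ∧
        (∀ s ∈ S, ∃ α β, t α β ≤ s) := by
  obtain ⟨lam, rep, rep_cover, rep_inj⟩ :=
    (sameBranchSetoid hpt C S hS.1).exists_ord_toType_transversal
  choose θ hθ t ht_mem ht_anti ht_coin using fun α =>
    (isChain_above_le hpt C (rep α)).exists_strictAnti_coinitial ⟨rep α, hS.1 _ (rep α).2, le_rfl⟩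
  have below_S : ∀ s ∈ S, ∃ α β, t α β ≤ s := by
    intro s hs
    obtain ⟨α, u, hu, hu_rep, hu_s⟩ := rep_cover ⟨s, hs⟩
    obtain ⟨β, hβ⟩ := ht_coin α u ⟨hu, hu_rep⟩
    exact ⟨α, β, hβ.trans hu_s⟩
  have eq_of_le : ∀ α α' β β', t α β ≤ t α' β' → α = α' := fun α α' β β' h =>
    rep_inj α α' ⟨t α β, (ht_mem α β).1, (ht_mem α β).2, h.trans (ht_mem α' β').2⟩
  refine ⟨lam, θ, t, ⟨fun α β => (ht_mem α β).1, fun s hs => ?_,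
    fun α => (hθ α).imp_right fun h => ⟨h.aleph0_le, h⟩, ht_anti,
    fun α s hs ⟨β, hβ⟩ => ht_coin α s ⟨hs, hβ.trans (ht_mem α β).2⟩,
    fun α α' hne β β' => ⟨fun h => hne (eq_of_le _ _ _ _ h),
      fun h => hne (eq_of_le _ _ _ _ h).symm⟩⟩,
    fun α β => ⟨rep α, (rep α).2, (ht_mem α β).2⟩, below_S⟩
  obtain ⟨r, hr, hrs⟩ := hS.2 s hs
  obtain ⟨α, β, h⟩ := below_S r hr
  exact ⟨α, β, h.trans hrs⟩

/-- In a pseudo-tree `T`, for every initial chain `C` and every set `S` of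
approximate immediate successors of `C`, there is a `λ`-fan above `C` which is coinitial
in `S`: every fan element lies below some element of `S` and every element of `S` lies
above some fan element. -/
theorem stmt16 {T : Type u} [PartialOrder T]
    (hpt : ∀ x : T, IsChain (· ≤ ·) {s : T | s ≤ x})
    (C : Set T) (hCne : C.Nonempty) (hCchain : IsChain (· ≤ ·) C) (hClower : IsLowerSet C)
    (S : Set T) (hS : ApproxImmSucc C S) :
    ∃ (lam : Cardinal.{u}) (θ : lam.ord.ToType → Cardinal.{u})
      (t : (α : lam.ord.ToType) → (θ α).ord.ToType → T),
      IsLambdaFan C lam θ t ∧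
        (∀ α β, ∃ s ∈ S, t α β ≤ s) ∧
        (∀ s ∈ S, ∃ α β, t α β ≤ s) :=
  stmt16_general hpt C S hS
end
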